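/- arXiv:1001.0985 — 7 statements merged into one kernel-verified Lean document; each statement's English description precedes it below -/
import Mathlib

section
/- Let C be a ribbon Ab-category with ground ring K = End(1), let I be an ideal of C, and let {t_V}_{V ∈ I} be a trace on I. Then for every V in I, the linear map t_V : End(V) → K is an ambidextrous trace on V, i.e. t_V(tr_L(f)) = t_V(tr_R(f)) for all f ∈ End(V ⊗ V). -/
open CategoryTheory MonoidalCategory

universe v u

variable {C : Type u} [Category.{v} C] [MonoidalCategory C]
  [BraidedCategory C] [RightRigidCategory C]

/-- A twist, making `C` into a ribbon category. -/
class RibbonTwist (C : Type u) [Category.{v} C] [MonoidalCategory C]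
    [BraidedCategory C] [RightRigidCategory C] where
  θ : ∀ V : C, V ⟶ V
  θ_isIso : ∀ V : C, IsIso (θ V)
  θ_natural : ∀ {V W : C} (f : V ⟶ W), f ≫ θ W = θ V ≫ f
  θ_tensor : ∀ V W : C, θ (V ⊗ W) = (θ V ⊗ₘ θ W) ≫ (β_ V W).hom ≫ (β_ W V).hom
  θ_dual : ∀ V : C, θ (Vᘁ) = (θ V)ᘁ

variable [RibbonTwist C]

open RibbonTwist

/-- The morphism `b'_V : 𝟙 ⟶ V* ⊗ V`. -/
noncomputable def coev' (V : C) : 𝟙_ C ⟶ Vᘁ ⊗ V :=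
  η_ V (Vᘁ) ≫ (β_ V (Vᘁ)).hom ≫ ((Vᘁ) ◁ θ V)

/-- The morphism `d'_V : V ⊗ V* ⟶ 𝟙`. -/
noncomputable def ev' (V : C) : V ⊗ (Vᘁ) ⟶ 𝟙_ C :=
  (θ V ▷ (Vᘁ)) ≫ (β_ V (Vᘁ)).hom ≫ ε_ V (Vᘁ)

/-- The left partial trace `tr_L`. -/
noncomputable def trL {V W : C} (f : V ⊗ W ⟶ V ⊗ W) : W ⟶ W :=
  (λ_ W).inv ≫ (coev' V ▷ W) ≫ (α_ _ _ _).hom ≫ ((Vᘁ) ◁ f) ≫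
    (α_ _ _ _).inv ≫ ((ε_ V (Vᘁ)) ▷ W) ≫ (λ_ W).hom

/-- The right partial trace `tr_R`. -/
noncomputable def trR {V W : C} (f : V ⊗ W ⟶ V ⊗ W) : V ⟶ V :=
  (ρ_ V).inv ≫ (V ◁ η_ W (Wᘁ)) ≫ (α_ _ _ _).inv ≫ (f ▷ (Wᘁ)) ≫
    (α_ _ _ _).hom ≫ (V ◁ ev' W) ≫ (ρ_ V).hom

/-- The categorical trace. -/
noncomputable def trC {V : C} (f : V ⟶ V) : 𝟙_ C ⟶ 𝟙_ C :=
  η_ V (Vᘁ) ≫ (f ▷ (Vᘁ)) ≫ ev' V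

/-- `InI V U` : `U` belongs to the ideal `I_V` generated by `V`, i.e. `U` is a
retract of `V ⊗ W` for some `W`. -/
def InI (V U : C) : Prop :=
  ∃ (W : C) (α : U ⟶ V ⊗ W) (β : V ⊗ W ⟶ U), α ≫ β = 𝟙 U

/-- A full subcategory (given by a predicate on objects) is an ideal if it is closed
under tensoring with arbitrary objects and under retracts. -/
structure IsIdeal (P : C → Prop) : Prop where
  tensor_mem : ∀ {V : C}, P V → ∀ W : C, P (V ⊗ W)
  retract_mem : ∀ {V W : C}, P V → ∀ (f : W ⟶ V) (g : V ⟶ W), f ≫ g = 𝟙 W → P W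


/-- A trace on the ideal `P`: a family of linear maps `t_V : End(V) → K`
compatible with partial traces and cyclic. -/
structure TraceOn [Preadditive C] (P : C → Prop) where
  t : ∀ V : C, P V → ((V ⟶ V) →+ (𝟙_ C ⟶ 𝟙_ C))
  tensor_compat : ∀ (U : C) (hU : P U) (W : C) (hUW : P (U ⊗ W)) (f : U ⊗ W ⟶ U ⊗ W),
    t (U ⊗ W) hUW f = t U hU (trR f)
  cyclic : ∀ (U V : C) (hU : P U) (hV : P V) (f : V ⟶ U) (g : U ⟶ V),
    t V hV (f ≫ g) = t U hU (g ≫ f)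

/-!
Write `e = c_{V,V} ∘ (θ_V ⊗ id_V)`. Conjugating `f` by `e` and closing the first strand on the
right turns the left closure of `f` into its right closure: the braiding moves the first strand
across, and the kink this creates on each side is undone by the twist, because the balancing
axiom `θ_{V ⊗ V*} = c² ∘ (θ ⊗ θ)` evaluated on `b_V` and `d_V` (where `θ_𝟙 = id`) trades
`c_{V*,V}⁻¹` for `θ_V²` there. Hence `tr_L f = tr_R (e⁻¹ f e)`, and the two trace axioms give
`t_V (tr_L f) = t_{V⊗V} (e⁻¹ f e) = t_{V⊗V} f = t_V (tr_R f)`.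
-/

attribute [instance] RibbonTwist.θ_isIso

namespace RibbonTwist

lemma twist_tensorUnit : θ (𝟙_ C) = 𝟙 (𝟙_ C) := by
  have hnat := θ_natural (λ_ (𝟙_ C)).hom
  have htensor : θ (𝟙_ C ⊗ 𝟙_ C) ≫ (λ_ (𝟙_ C)).hom = (λ_ (𝟙_ C)).hom ≫ θ (𝟙_ C) ≫ θ (𝟙_ C) := by
    rw [θ_tensor, MonoidalCategory.tensorHom_def]
    simp [← unitors_equal, ← unitors_inv_equal]
  rw [htensor, cancel_epi] at hnat
  exact (cancel_epi (θ (𝟙_ C))).mp (by simpa using hnat.symm)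

variable (V : C)

lemma coevaluation_comp_twist_tensor :
    η_ V (Vᘁ) ≫ (β_ V (Vᘁ)).hom ≫ (β_ (Vᘁ) V).hom ≫ (θ V ⊗ₘ θ (Vᘁ)) = η_ V (Vᘁ) := by
  simpa [θ_tensor, twist_tensorUnit] using θ_natural (η_ V (Vᘁ))

lemma twist_tensor_comp_evaluation :
    (β_ (Vᘁ) V).hom ≫ (β_ V (Vᘁ)).hom ≫ (θ (Vᘁ) ⊗ₘ θ V) ≫ ε_ V (Vᘁ) = ε_ V (Vᘁ) := by
  simpa [θ_tensor, twist_tensorUnit] using (θ_natural (ε_ V (Vᘁ))).symm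

lemma coevaluation_braiding_inv :
    η_ V (Vᘁ) ≫ (β_ (Vᘁ) V).inv = coev' V ≫ ((Vᘁ) ◁ θ V) := by
  have htwists : η_ V (Vᘁ) ≫ (β_ (Vᘁ) V).inv = η_ V (Vᘁ) ≫ (β_ V (Vᘁ)).hom ≫ (θ (Vᘁ) ⊗ₘ θ V) := by
    conv_lhs => rw [← coevaluation_comp_twist_tensor V]
    simp
  calc η_ V (Vᘁ) ≫ (β_ (Vᘁ) V).inv
      = η_ V (Vᘁ) ≫ (V ◁ θ (Vᘁ)) ≫ (β_ V (Vᘁ)).hom ≫ ((Vᘁ) ◁ θ V) := by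
        rw [htwists, MonoidalCategory.tensorHom_def,
          BraidedCategory.braiding_naturality_right_assoc]
    _ = η_ V (Vᘁ) ≫ (θ V ▷ (Vᘁ)) ≫ (β_ V (Vᘁ)).hom ≫ ((Vᘁ) ◁ θ V) := by
        rw [θ_dual, coevaluation_comp_rightAdjointMate_assoc]
    _ = coev' V ≫ ((Vᘁ) ◁ θ V) := by
        simp [coev', BraidedCategory.braiding_naturality_left_assoc]

lemma braiding_twist_ev' : (β_ (Vᘁ) V).hom ≫ (θ V ▷ (Vᘁ)) ≫ ev' V = ε_ V (Vᘁ) := by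
  have htwists : ((Vᘁ) ◁ θ V) ≫ ((Vᘁ) ◁ θ V) ≫ ε_ V (Vᘁ) = (θ (Vᘁ) ⊗ₘ θ V) ≫ ε_ V (Vᘁ) := by
    rw [MonoidalCategory.tensorHom_def, Category.assoc, ← whisker_exchange_assoc, θ_dual,
      rightAdjointMate_comp_evaluation]
  rw [ev', ← comp_whiskerRight_assoc, BraidedCategory.braiding_naturality_left_assoc]
  simpa [htwists] using twist_tensor_comp_evaluation V

noncomputable def twistBraiding : V ⊗ V ≅ V ⊗ V :=
  whiskerRightIso (asIso (θ V)) V ≪≫ β_ V V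

lemma coevaluation_twistBraiding_inv :
    (ρ_ V).inv ≫ (V ◁ η_ V (Vᘁ)) ≫ (α_ V V (Vᘁ)).inv ≫ ((twistBraiding V).inv ▷ (Vᘁ)) ≫
      (β_ (Vᘁ) (V ⊗ V)).inv
    = (λ_ V).inv ≫ (coev' V ▷ V) ≫ (α_ (Vᘁ) V V).hom := by
  have hhex : (α_ V V (Vᘁ)).inv ≫ ((β_ V V).inv ▷ (Vᘁ)) ≫ (β_ (Vᘁ) (V ⊗ V)).inv
      = (β_ (V ⊗ (Vᘁ)) V).inv ≫ ((β_ (Vᘁ) V).inv ▷ V) ≫ (α_ (Vᘁ) V V).hom := by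
    simp [BraidedCategory.braiding_tensor_right_inv, BraidedCategory.braiding_tensor_left_inv]
  calc (ρ_ V).inv ≫ (V ◁ η_ V (Vᘁ)) ≫ (α_ V V (Vᘁ)).inv ≫ ((twistBraiding V).inv ▷ (Vᘁ)) ≫
        (β_ (Vᘁ) (V ⊗ V)).inv
      = (ρ_ V).inv ≫ (V ◁ η_ V (Vᘁ)) ≫ ((α_ V V (Vᘁ)).inv ≫ ((β_ V V).inv ▷ (Vᘁ)) ≫
          (β_ (Vᘁ) (V ⊗ V)).inv) ≫ ((Vᘁ) ◁ (inv (θ V) ▷ V)) := by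
        rw [twistBraiding, Iso.trans_inv, whiskerRightIso_inv, asIso_inv, comp_whiskerRight_assoc,
          BraidedCategory.braiding_inv_naturality_left]
        simp only [Category.assoc]
    _ = (λ_ V).inv ≫ ((η_ V (Vᘁ) ≫ (β_ (Vᘁ) V).inv) ▷ V) ≫ (α_ (Vᘁ) V V).hom ≫
          ((Vᘁ) ◁ (inv (θ V) ▷ V)) := by
        rw [hhex, Category.assoc, BraidedCategory.braiding_inv_naturality_right_assoc]
        simp [braiding_inv_tensorUnit_left]
    _ = (λ_ V).inv ≫ (coev' V ▷ V) ≫ (α_ (Vᘁ) V V).hom := by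
        rw [coevaluation_braiding_inv, comp_whiskerRight, Category.assoc,
          associator_naturality_middle_assoc, ← MonoidalCategory.whiskerLeft_comp,
          ← comp_whiskerRight]
        simp

lemma twistBraiding_hom_evaluation :
    (β_ (Vᘁ) (V ⊗ V)).hom ≫ ((twistBraiding V).hom ▷ (Vᘁ)) ≫
      (α_ V V (Vᘁ)).hom ≫ (V ◁ ev' V) ≫ (ρ_ V).hom
    = (α_ (Vᘁ) V V).inv ≫ (ε_ V (Vᘁ) ▷ V) ≫ (λ_ V).hom := by
  have hhex : (β_ (Vᘁ) (V ⊗ V)).hom ≫ ((β_ V V).hom ▷ (Vᘁ)) ≫ (α_ V V (Vᘁ)).hom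
      = (α_ (Vᘁ) V V).inv ≫ ((β_ (Vᘁ) V).hom ▷ V) ≫ (β_ (V ⊗ (Vᘁ)) V).hom := by
    simp [BraidedCategory.braiding_tensor_right_hom, BraidedCategory.braiding_tensor_left_hom]
  calc (β_ (Vᘁ) (V ⊗ V)).hom ≫ ((twistBraiding V).hom ▷ (Vᘁ)) ≫
        (α_ V V (Vᘁ)).hom ≫ (V ◁ ev' V) ≫ (ρ_ V).hom
      = ((β_ (Vᘁ) (V ⊗ V)).hom ≫ ((β_ V V).hom ▷ (Vᘁ)) ≫ (α_ V V (Vᘁ)).hom) ≫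
          (V ◁ ((θ V ▷ (Vᘁ)) ≫ ev' V)) ≫ (ρ_ V).hom := by
        rw [twistBraiding, Iso.trans_hom, whiskerRightIso_hom, asIso_hom,
          BraidedCategory.braiding_naturality_left, comp_whiskerRight_assoc,
          associator_naturality_middle_assoc, ← MonoidalCategory.whiskerLeft_comp_assoc]
        simp only [Category.assoc]
    _ = (α_ (Vᘁ) V V).inv ≫ (((β_ (Vᘁ) V).hom ≫ (θ V ▷ (Vᘁ)) ≫ ev' V) ▷ V) ≫ (λ_ V).hom := by
        rw [hhex, Category.assoc, Category.assoc, ← BraidedCategory.braiding_naturality_left_assoc,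
          braiding_tensorUnit_left]
        simp
    _ = (α_ (Vᘁ) V V).inv ≫ (ε_ V (Vᘁ) ▷ V) ≫ (λ_ V).hom := by
        rw [braiding_twist_ev']

lemma trR_conj_twistBraiding (f : V ⊗ V ⟶ V ⊗ V) :
    trR ((twistBraiding V).inv ≫ f ≫ (twistBraiding V).hom) = trL f := by
  have hf : f ▷ (Vᘁ) = (β_ (Vᘁ) (V ⊗ V)).inv ≫ ((Vᘁ) ◁ f) ≫ (β_ (Vᘁ) (V ⊗ V)).hom := by
    rw [Iso.eq_inv_comp, BraidedCategory.braiding_naturality_right]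
  simp only [trR, trL, comp_whiskerRight, hf, Category.assoc]
  rw [reassoc_of% coevaluation_twistBraiding_inv V, twistBraiding_hom_evaluation]

end RibbonTwist

lemma TraceOn.t_conj [Preadditive C] {P : C → Prop} (T : TraceOn P) {U : C} (hU : P U)
    (e : U ≅ U) (f : U ⟶ U) : T.t U hU (e.inv ≫ f ≫ e.hom) = T.t U hU f := by
  rw [T.cyclic U U hU hU e.inv (f ≫ e.hom)]
  simp

theorem stmt3 [Preadditive C] (P : C → Prop) (hP : IsIdeal P) (T : TraceOn P)
    (V : C) (hV : P V) (f : V ⊗ V ⟶ V ⊗ V) :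
    T.t V hV (trL f) = T.t V hV (trR f) := by
  have hVV : P (V ⊗ V) := hP.tensor_mem hV V
  rw [← RibbonTwist.trR_conj_twistBraiding V, ← T.tensor_compat V hV V hVV,
    ← T.tensor_compat V hV V hVV, T.t_conj]
end

section
/- Let C be a ribbon Ab-category and J an object such that the braiding c_{J,J} commutes with every element of End(J ⊗ J). Then any linear map t : End(J) → K is an ambidextrous trace on J, i.e. t(tr_L(f)) = t(tr_R(f)) for all f ∈ End(J ⊗ J). -/
/-!
Once the twists in `b'_W` and `d'_W` are moved onto the dual strand, `tr_R f` and
`tr_L (c⁻¹ ∘ f ∘ c)` close the same loop, on opposite sides; sliding the loop across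
the braiding uses only naturality and the Yang–Baxter equation. If `c_{J,J}` commutes
with `f`, the conjugate `c⁻¹ ∘ f ∘ c` is `f` itself, so `tr_L f = tr_R f` already before `t`.
-/

open CategoryTheory MonoidalCategory

universe v u

variable {C : Type u} [Category.{v} C] [MonoidalCategory C]
  [BraidedCategory C] [RightRigidCategory C]

variable [RibbonTwist C]

open RibbonTwist

open BraidedCategory

section Braided

variable {D : Type*} [Category D] [MonoidalCategory D] [BraidedCategory D]

theorem leftUnitor_inv_whiskerRight_eq_braiding {Y : D} (u : 𝟙_ D ⟶ Y) (V : D) :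
    (λ_ V).inv ≫ (u ▷ V) = (ρ_ V).inv ≫ (V ◁ u) ≫ (β_ V Y).hom := by
  rw [braiding_naturality_right, rightUnitor_inv_braiding_assoc]

theorem whiskerRight_leftUnitor_eq_braiding_inv {Y : D} (e : Y ⟶ 𝟙_ D) (V : D) :
    (e ▷ V) ≫ (λ_ V).hom = (β_ V Y).inv ≫ (V ◁ e) ≫ (ρ_ V).hom := by
  rw [Iso.eq_inv_comp, ← braiding_naturality_right_assoc, braiding_leftUnitor]

theorem whiskerLeft_braiding_comp_braiding (V W X : D) :
    (V ◁ (β_ W X).hom) ≫ (β_ V (X ⊗ W)).hom ≫ (α_ X W V).hom =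
      (α_ V W X).inv ≫ (β_ V W).hom ▷ X ≫ (β_ (W ⊗ V) X).hom := by
  simpa [braiding_tensor_left_hom, braiding_tensor_right_hom] using (yang_baxter V W X).symm

theorem braiding_conj_slide {V W X : D} (u : 𝟙_ D ⟶ W ⊗ X) (e : X ⊗ W ⟶ 𝟙_ D)
    (f : V ⊗ W ⟶ V ⊗ W) :
    (λ_ V).inv ≫ ((u ≫ (β_ W X).hom) ▷ V) ≫ (α_ _ _ _).hom ≫
        (X ◁ ((β_ V W).inv ≫ f ≫ (β_ V W).hom)) ≫ (α_ _ _ _).inv ≫ (e ▷ V) ≫ (λ_ V).hom =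
      (ρ_ V).inv ≫ (V ◁ u) ≫ (α_ _ _ _).inv ≫ (f ▷ X) ≫ (α_ _ _ _).hom ≫
        (V ◁ ((β_ W X).hom ≫ e)) ≫ (ρ_ V).hom := by
  have slide : (V ◁ (β_ W X).hom) ≫ (β_ V (X ⊗ W)).hom ≫ (α_ X W V).hom ≫
      (X ◁ ((β_ V W).inv ≫ f ≫ (β_ V W).hom)) =
      (α_ V W X).inv ≫ (f ▷ X) ≫ (α_ V W X).hom ≫ (V ◁ (β_ W X).hom) ≫
        (β_ V (X ⊗ W)).hom ≫ (α_ X W V).hom := by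
    rw [reassoc_of% whiskerLeft_braiding_comp_braiding, whiskerLeft_braiding_comp_braiding,
      ← braiding_naturality_left]
    simp
  rw [← Category.assoc, leftUnitor_inv_whiskerRight_eq_braiding,
    whiskerRight_leftUnitor_eq_braiding_inv]
  simp only [MonoidalCategory.whiskerLeft_comp V u, Category.assoc]
  rw [reassoc_of% slide]
  simp

end Braided

theorem coev'_eq_twist_dual (V : C) :
    coev' V = (η_ V (Vᘁ) ≫ (V ◁ θ (Vᘁ))) ≫ (β_ V (Vᘁ)).hom := by
  rw [coev', θ_dual, ← braiding_naturality_left, ← coevaluation_comp_rightAdjointMate_assoc,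
    Category.assoc]

theorem ev'_eq_twist_dual (V : C) :
    ev' V = (V ◁ θ (Vᘁ)) ≫ (β_ V (Vᘁ)).hom ≫ ε_ V (Vᘁ) := by
  rw [ev', braiding_naturality_left_assoc, braiding_naturality_right_assoc, θ_dual,
    rightAdjointMate_comp_evaluation]

theorem trR_eq_trL_braiding_conj {V W : C} (f : V ⊗ W ⟶ V ⊗ W) :
    trR f = trL ((β_ V W).inv ≫ f ≫ (β_ V W).hom) := by
  rw [trL, coev'_eq_twist_dual, braiding_conj_slide, trR, ev'_eq_twist_dual]
  simp only [MonoidalCategory.whiskerLeft_comp, Category.assoc]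
  rw [← associator_naturality_right_assoc, ← whisker_exchange_assoc,
    ← associator_inv_naturality_right_assoc]

theorem stmt5 [Preadditive C] (J : C)
    (hc : ∀ g : J ⊗ J ⟶ J ⊗ J, g ≫ (β_ J J).hom = (β_ J J).hom ≫ g)
    (t : (J ⟶ J) →+ (𝟙_ C ⟶ 𝟙_ C)) (f : J ⊗ J ⟶ J ⊗ J) :
    t (trL f) = t (trR f) := by
  rw [trR_eq_trL_braiding_conj, hc, Iso.inv_hom_id_assoc]
end

section
/- Let C be a ribbon Ab-category which is abelian with exact tensor product, and let a morphism of short exact sequences 0 → A' → A → A'' → 0 with vertical maps f', f, f'' be given. Then the categorical trace is additive: tr_C(f) = tr_C(f') + tr_C(f''). -/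
open CategoryTheory MonoidalCategory

universe v u

variable {C : Type u} [Category.{v} C] [MonoidalCategory C]
  [BraidedCategory C] [RightRigidCategory C]

variable [RibbonTwist C]

open RibbonTwist

/-!
Write `tr f = ⌜f⌝ ≫ d'_A` with `⌜f⌝ = b_A ≫ (f ⊗ id) : 𝟙 ⟶ A ⊗ A*` (`coevName`). Tensoring with an
object has adjoints on both sides (tensoring with its dual, up to the braiding), so it is exact,
and dualising `0 → A' → A → A'' → 0` gives a short exact sequence `0 → A''* → A* → A'* → 0`.
After refining `𝟙` by an epimorphism, `⌜f'⌝` lifts along `A' ⊗ A* ⟶ A' ⊗ A'*` and `⌜f''⌝` along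
`A ⊗ A''* ⟶ A'' ⊗ A''*`; pushing both lifts into `A ⊗ A*` gives a morphism agreeing with `⌜f⌝`
after `A ⊗ A* ⟶ A ⊗ A'*` and after `A ⊗ A* ⟶ A'' ⊗ A*`. Whatever both maps kill, `d'_A` kills:
by exactness it factors locally through `A ⊗ A''*`, killed by `A ⊗ A''* ⟶ A'' ⊗ A''*`, and
naturality of `d'` makes `d'_A` on `A ⊗ A''*` factor through that map. Naturality of `d'` also
turns the two pushed lifts into `tr f'` and `tr f''`.
-/

open Limits

section RightRigid

omit [BraidedCategory C] [RibbonTwist C]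

lemma whiskerRight_comp_evaluation_bijective (Z X : C) :
    Function.Bijective fun c : Z ⟶ Xᘁ => c ▷ X ≫ ε_ X Xᘁ := by
  have h : (fun c : Z ⟶ Xᘁ => c ▷ X ≫ ε_ X Xᘁ) =
      (tensorRightHomEquiv Z X Xᘁ (𝟙_ C)).symm ∘ fun c => c ≫ (λ_ Xᘁ).inv := by
    funext c
    simp [Equiv.eq_symm_apply]
  rw [h]
  exact (tensorRightHomEquiv Z X Xᘁ (𝟙_ C)).symm.bijective.comp
    ((λ_ Xᘁ).homToEquiv.symm).bijective

lemma coevaluation_comp_whiskerLeft_injective (X Z : C) :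
    Function.Injective fun c : Xᘁ ⟶ Z => η_ X Xᘁ ≫ X ◁ c := by
  intro a b h
  simpa using congrArg (tensorLeftHomEquiv (𝟙_ C) X Xᘁ Z).symm h

lemma comp_rightAdjointMate_whiskerRight_comp_evaluation {X Y Z : C} (f : X ⟶ Y)
    (c : Z ⟶ Yᘁ) : (c ≫ fᘁ) ▷ X ≫ ε_ X Xᘁ = Z ◁ f ≫ c ▷ Y ≫ ε_ Y Yᘁ := by
  rw [comp_whiskerRight_assoc, rightAdjointMate_comp_evaluation, whisker_exchange_assoc]

lemma coevaluation_comp_whiskerLeft_rightAdjointMate_comp {X Y Z : C} (f : X ⟶ Y)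
    (c : Xᘁ ⟶ Z) : η_ Y Yᘁ ≫ Y ◁ (fᘁ ≫ c) = η_ X Xᘁ ≫ X ◁ c ≫ f ▷ Z := by
  rw [whiskerLeft_comp, coevaluation_comp_rightAdjointMate_assoc, whisker_exchange]

noncomputable def coevName {X Y : C} (f : X ⟶ Y) : 𝟙_ C ⟶ Y ⊗ Xᘁ :=
  η_ X Xᘁ ≫ f ▷ Xᘁ

lemma coevName_comp_whiskerRight {X Y Y' : C} (f : X ⟶ Y) (h : Y ⟶ Y') :
    coevName f ≫ h ▷ Xᘁ = coevName (f ≫ h) := by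
  simp [coevName]

lemma coevName_comp_whiskerLeft_rightAdjointMate {W X Y : C} (g : W ⟶ X) (f : X ⟶ Y) :
    coevName f ≫ Y ◁ gᘁ = coevName (g ≫ f) := by
  rw [coevName, coevName, Category.assoc, ← whisker_exchange,
    coevaluation_comp_rightAdjointMate_assoc, comp_whiskerRight]

variable [HasZeroMorphisms C] {S₁ S₂ : ShortComplex C} (φ : S₁ ⟶ S₂)

lemma coevName_τ₂_comp_whiskerLeft_f :
    coevName φ.τ₂ ≫ S₂.X₂ ◁ S₁.fᘁ = coevName φ.τ₁ ≫ S₂.f ▷ S₁.X₁ᘁ := by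
  rw [coevName_comp_whiskerLeft_rightAdjointMate, ← φ.comm₁₂, coevName_comp_whiskerRight]

lemma coevName_τ₂_comp_g_whiskerRight :
    coevName φ.τ₂ ≫ S₂.g ▷ S₁.X₂ᘁ = coevName φ.τ₃ ≫ S₂.X₃ ◁ S₁.gᘁ := by
  rw [coevName_comp_whiskerRight, φ.comm₂₃, coevName_comp_whiskerLeft_rightAdjointMate]

end RightRigid

section BraidedRightRigid

omit [RibbonTwist C]

instance tensorLeft_isRightAdjoint (X : C) : (tensorLeft X).IsRightAdjoint :=
  (tensorLeftAdjunction X Xᘁ).isRightAdjoint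

instance tensorRight_isLeftAdjoint (X : C) : (tensorRight X).IsLeftAdjoint :=
  (tensorRightAdjunction X Xᘁ).isLeftAdjoint

instance tensorLeft_isLeftAdjoint (X : C) : (tensorLeft X).IsLeftAdjoint :=
  Functor.isLeftAdjoint_of_iso (BraidedCategory.tensorLeftIsoTensorRight X).symm

instance tensorRight_isRightAdjoint (X : C) : (tensorRight X).IsRightAdjoint :=
  Functor.isRightAdjoint_of_iso (BraidedCategory.tensorLeftIsoTensorRight X)

instance whiskerLeft_epi (X : C) {Y Z : C} (f : Y ⟶ Z) [Epi f] : Epi (X ◁ f) :=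
  inferInstanceAs (Epi ((tensorLeft X).map f))

instance whiskerLeft_mono (X : C) {Y Z : C} (f : Y ⟶ Z) [Mono f] : Mono (X ◁ f) :=
  inferInstanceAs (Mono ((tensorLeft X).map f))

instance whiskerRight_epi {X Y : C} (f : X ⟶ Y) (Z : C) [Epi f] : Epi (f ▷ Z) :=
  inferInstanceAs (Epi ((tensorRight Z).map f))

instance whiskerRight_mono {X Y : C} (f : X ⟶ Y) (Z : C) [Mono f] : Mono (f ▷ Z) :=
  inferInstanceAs (Mono ((tensorRight Z).map f))

instance mono_rightAdjointMate {X Y : C} (f : X ⟶ Y) [Epi f] : Mono (fᘁ) where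
  right_cancellation {Z} a b h := by
    apply (whiskerRight_comp_evaluation_bijective Z Y).injective
    simpa only [comp_rightAdjointMate_whiskerRight_comp_evaluation, cancel_epi]
      using congrArg (· ▷ X ≫ ε_ X Xᘁ) h

instance epi_rightAdjointMate {X Y : C} (f : X ⟶ Y) [Mono f] : Epi (fᘁ) where
  left_cancellation {Z} a b h := by
    apply coevaluation_comp_whiskerLeft_injective X Z
    simpa only [coevaluation_comp_whiskerLeft_rightAdjointMate_comp, ← Category.assoc,
      cancel_mono] using congrArg (η_ Y Yᘁ ≫ Y ◁ ·) h

variable [Abelian C]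

instance monoidalPreadditive_of_rightRigid : MonoidalPreadditive C :=
  have (X : C) : (tensorLeft X).Additive := Functor.additive_of_preserves_binary_products _
  have (X : C) : (tensorRight X).Additive := Functor.additive_of_preserves_binary_products _
  { whiskerLeft_zero := (tensorLeft _).map_zero _ _
    zero_whiskerRight := (tensorRight _).map_zero _ _
    whiskerLeft_add _ _ := (tensorLeft _).map_add
    add_whiskerRight _ _ := (tensorRight _).map_add }

@[simp]
lemma rightAdjointMate_zero {X Y : C} : (0 : X ⟶ Y)ᘁ = 0 := by
  simp [rightAdjointMate]

noncomputable def CategoryTheory.ShortComplex.rightDual (S : ShortComplex C) : ShortComplex C where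
  X₁ := S.X₃ᘁ
  X₂ := S.X₂ᘁ
  X₃ := S.X₁ᘁ
  f := S.gᘁ
  g := S.fᘁ
  zero := by rw [← comp_rightAdjointMate, S.zero, rightAdjointMate_zero]

lemma CategoryTheory.ShortComplex.ShortExact.rightDual {S : ShortComplex C} (hS : S.ShortExact) :
    S.rightDual.ShortExact := by
  have := hS.mono_f
  have := hS.epi_g
  refine
    { mono_f := mono_rightAdjointMate S.g
      epi_g := epi_rightAdjointMate S.f
      exact := ?_ }
  rw [ShortComplex.exact_iff_exact_up_to_refinements]
  intro W (k : W ⟶ S.X₂ᘁ) (hk : k ≫ S.fᘁ = 0)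
  -- `k` is a pairing `W ⊗ X₂ ⟶ 𝟙` vanishing on `W ⊗ X₁`, so it descends to `W ⊗ X₃`.
  have hSW := hS.map_of_exact (tensorLeft W)
  have := hSW.epi_g
  have hk' : W ◁ S.f ≫ k ▷ S.X₂ ≫ ε_ S.X₂ S.X₂ᘁ = 0 := by
    rw [← comp_rightAdjointMate_whiskerRight_comp_evaluation, hk,
      MonoidalPreadditive.zero_whiskerRight, zero_comp]
  obtain ⟨l, hl⟩ := (whiskerRight_comp_evaluation_bijective W S.X₃).surjective
    (hSW.exact.desc (k ▷ S.X₂ ≫ ε_ S.X₂ S.X₂ᘁ) hk')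
  refine ⟨W, 𝟙 W, inferInstance, l, ?_⟩
  show 𝟙 W ≫ k = l ≫ S.gᘁ
  rw [Category.id_comp]
  apply (whiskerRight_comp_evaluation_bijective W S.X₂).injective
  dsimp only at hl ⊢
  rw [comp_rightAdjointMate_whiskerRight_comp_evaluation, hl]
  exact (hSW.exact.g_desc _ _).symm

end BraidedRightRigid

lemma whiskerRight_comp_ev' {X Y : C} (f : X ⟶ Y) : f ▷ Yᘁ ≫ ev' Y = X ◁ fᘁ ≫ ev' X := by
  rw [ev', ev', ← comp_whiskerRight_assoc, θ_natural, comp_whiskerRight_assoc,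
    BraidedCategory.braiding_naturality_left_assoc, ← rightAdjointMate_comp_evaluation,
    ← BraidedCategory.braiding_naturality_right_assoc, whisker_exchange_assoc]

lemma comp_ev'_eq_zero_of_shortExact [Abelian C] {S : ShortComplex C} (hS : S.ShortExact) {Z : C}
    (t : Z ⟶ S.X₂ ⊗ S.X₂ᘁ) (hf : t ≫ S.X₂ ◁ S.fᘁ = 0) (hg : t ≫ S.g ▷ S.X₂ᘁ = 0) :
    t ≫ ev' S.X₂ = 0 := by
  have := hS.epi_g
  obtain ⟨Z', π, _, (s : Z' ⟶ S.X₂ ⊗ S.X₃ᘁ), hs⟩ :=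
    (hS.rightDual.map_of_exact (tensorLeft S.X₂)).exact.exact_up_to_refinements t hf
  replace hs : π ≫ t = s ≫ S.X₂ ◁ S.gᘁ := hs
  have hsg : s ≫ S.g ▷ S.X₃ᘁ = 0 := by
    rw [← cancel_mono (S.X₃ ◁ S.gᘁ), Category.assoc, ← whisker_exchange, ← Category.assoc,
      ← hs, Category.assoc, hg, comp_zero, zero_comp]
  rw [← cancel_epi π, reassoc_of% hs, ← whiskerRight_comp_ev', reassoc_of% hsg, zero_comp,
    comp_zero]

lemma trC_eq_coevName_comp_ev' {X : C} (f : X ⟶ X) : trC f = coevName f ≫ ev' X :=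
  (Category.assoc _ _ _).symm

lemma comp_trC_τ₂_eq_of_lifts [Abelian C] {S : ShortComplex C} (hS : S.ShortExact) (f : S ⟶ S)
    {Z : C} (t : Z ⟶ 𝟙_ C) (s₁ : Z ⟶ S.X₁ ⊗ S.X₂ᘁ) (s₃ : Z ⟶ S.X₂ ⊗ S.X₃ᘁ)
    (hs₁ : t ≫ coevName f.τ₁ = s₁ ≫ S.X₁ ◁ S.fᘁ) (hs₃ : t ≫ coevName f.τ₃ = s₃ ≫ S.g ▷ S.X₃ᘁ) :
    t ≫ trC f.τ₂ = t ≫ (trC f.τ₁ + trC f.τ₃) := by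
  set splitting := s₁ ≫ S.f ▷ S.X₂ᘁ + s₃ ≫ S.X₂ ◁ S.gᘁ
  have hf : (t ≫ coevName f.τ₂) ≫ S.X₂ ◁ S.fᘁ = splitting ≫ S.X₂ ◁ S.fᘁ := by
    rw [Preadditive.add_comp]
    simp only [Category.assoc, coevName_τ₂_comp_whiskerLeft_f, reassoc_of% hs₁, whisker_exchange,
      ← whiskerLeft_comp, ← comp_rightAdjointMate, S.zero, rightAdjointMate_zero,
      MonoidalPreadditive.whiskerLeft_zero, comp_zero, add_zero]
  have hg : (t ≫ coevName f.τ₂) ≫ S.g ▷ S.X₂ᘁ = splitting ≫ S.g ▷ S.X₂ᘁ := by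
    rw [Preadditive.add_comp]
    simp only [Category.assoc, coevName_τ₂_comp_g_whiskerRight, reassoc_of% hs₃, whisker_exchange,
      ← comp_whiskerRight, S.zero, MonoidalPreadditive.zero_whiskerRight, comp_zero, zero_add]
  have key : (t ≫ coevName f.τ₂) ≫ ev' S.X₂ = splitting ≫ ev' S.X₂ := by
    rw [← sub_eq_zero, ← Preadditive.sub_comp]
    exact comp_ev'_eq_zero_of_shortExact hS _ (by rw [Preadditive.sub_comp, hf, sub_self])
      (by rw [Preadditive.sub_comp, hg, sub_self])
  calc t ≫ trC f.τ₂ = splitting ≫ ev' S.X₂ := by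
        rw [trC_eq_coevName_comp_ev', ← key, Category.assoc]
    _ = t ≫ (trC f.τ₁ + trC f.τ₃) := by
        simp only [splitting, trC_eq_coevName_comp_ev', Preadditive.add_comp, Preadditive.comp_add,
          Category.assoc, whiskerRight_comp_ev', reassoc_of% hs₁, reassoc_of% hs₃]

theorem stmt7 [Abelian C] (S : ShortComplex C) (hS : S.ShortExact) (f : S ⟶ S) :
    trC f.τ₂ = trC f.τ₁ + trC f.τ₃ := by
  have := hS.mono_f
  have := hS.epi_g
  obtain ⟨Z₁, π₁, _, s₁, hs₁⟩ := surjective_up_to_refinements_of_epi (S.X₁ ◁ S.fᘁ) (coevName f.τ₁)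
  obtain ⟨Z, π₂, _, s₃, hs₃⟩ :=
    surjective_up_to_refinements_of_epi (S.g ▷ S.X₃ᘁ) (π₁ ≫ coevName f.τ₃)
  rw [← cancel_epi π₁, ← cancel_epi π₂, ← Category.assoc, ← Category.assoc]
  exact comp_trC_τ₂_eq_of_lifts hS f (π₂ ≫ π₁) (π₂ ≫ s₁) s₃
    (by rw [Category.assoc, hs₁, Category.assoc]) (by rw [Category.assoc, hs₃])
end

section
/- Let C be an abelian ribbon Ab-category and J an absolutely indecomposable object of C such that every element of the radical of End(J) is nilpotent. Then the categorical trace tr_C vanishes identically on Rad(End(J)). -/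
open CategoryTheory MonoidalCategory

universe v u

variable {C : Type u} [Category.{v} C] [MonoidalCategory C]
  [BraidedCategory C] [RightRigidCategory C]

variable [RibbonTwist C]

open RibbonTwist

/-!
A nilpotent endomorphism `f` has trace zero. Factor `f = p ≫ i` through its image; by cyclicity
`tr(f) = tr(i ≫ p)`, and `(p ≫ i)^(n+1) = p ≫ (i ≫ p)^n ≫ i` with `p` epi and `i` mono shows that
`i ≫ p` is nilpotent of smaller order. Radical elements of `End J` are nilpotent by hypothesis.
-/

open Limits ZeroObject

/-- `0 ▷ W` factors through `0 ⊗ W`, which is initial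
because `(0 ⊗ W ⟶ Z) ≃ (0 ⟶ Z ⊗ Wᘁ)`. -/
lemma zero_whiskerRight_of_hasZeroObject {D : Type*} [Category D] [MonoidalCategory D]
    [RightRigidCategory D] [HasZeroMorphisms D] [HasZeroObject D] {A B : D} (W : D) :
    (0 : A ⟶ B) ▷ W = 0 := by
  have hzero : (0 : (0 : D) ⟶ B) ▷ W = 0 :=
    (tensorRightHomEquiv (0 : D) W (Wᘁ) (B ⊗ W)).injective ((isZero_zero D).eq_of_src _ _)
  rw [← zero_comp (X := A) (f := (0 : (0 : D) ⟶ B)), comp_whiskerRight, hzero, comp_zero]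

lemma trC_zero [HasZeroMorphisms C] [HasZeroObject C] (X : C) : trC (0 : X ⟶ X) = 0 := by
  simp [trC, zero_whiskerRight_of_hasZeroObject]

lemma trC_comp_comm {X Y : C} (v : X ⟶ Y) (u : Y ⟶ X) :
    trC (v ≫ u) = trC (u ≫ v) := by
  have key : ∀ w : X ⟶ Y,
      η_ X (Xᘁ) ≫ (w ▷ (Xᘁ)) ≫ (u ▷ (Xᘁ)) ≫ (β_ X (Xᘁ)).hom ≫ ε_ X (Xᘁ) =
      η_ Y (Yᘁ) ≫ (u ▷ (Yᘁ)) ≫ (w ▷ (Yᘁ)) ≫ (β_ Y (Yᘁ)).hom ≫ ε_ Y (Yᘁ) := by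
    intro w
    -- slide `u` around the loop: through `ε` it becomes its mate `uᘁ`, which `η` turns back into `u`
    rw [BraidedCategory.braiding_naturality_left_assoc, ← rightAdjointMate_comp_evaluation,
      ← BraidedCategory.braiding_naturality_right_assoc, ← whisker_exchange_assoc,
      coevaluation_comp_rightAdjointMate_assoc]
  calc trC (v ≫ u)
      = η_ X (Xᘁ) ≫ ((v ≫ θ Y) ▷ (Xᘁ)) ≫ (u ▷ (Xᘁ)) ≫ (β_ X (Xᘁ)).hom ≫ ε_ X (Xᘁ) := by
        simp only [trC, ev', comp_whiskerRight, Category.assoc]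
        rw [← comp_whiskerRight_assoc u (θ X), θ_natural u, comp_whiskerRight_assoc]
    _ = η_ Y (Yᘁ) ≫ (u ▷ (Yᘁ)) ≫ ((v ≫ θ Y) ▷ (Yᘁ)) ≫ (β_ Y (Yᘁ)).hom ≫ ε_ Y (Yᘁ) :=
        key (v ≫ θ Y)
    _ = trC (u ≫ v) := by simp only [trC, ev', comp_whiskerRight, Category.assoc]

lemma End.of_comp_pow_succ {D : Type*} [Category D] {X Y : D} (p : X ⟶ Y) (i : Y ⟶ X) (n : ℕ) :
    (End.of (p ≫ i) ^ (n + 1) : X ⟶ X) = p ≫ (End.of (i ≫ p) ^ n : Y ⟶ Y) ≫ i := by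
  induction n with
  | zero => simp [End.one_def]
  | succ n ih =>
    rw [pow_succ', End.mul_def, ih, pow_succ', End.mul_def]
    simp only [Category.assoc]

lemma trC_eq_zero_of_pow_eq_zero [Abelian C] {X : C} {f : End X} {n : ℕ} (hf : f ^ n = 0) :
    trC (f : X ⟶ X) = 0 := by
  induction n generalizing X with
  | zero =>
    rw [← one_mul f, ← pow_zero f, hf, zero_mul]
    exact trC_zero X
  | succ n ih =>
    have hfac : Abelian.factorThruImage f ≫ Abelian.image.ι f = f := Abelian.image.fac f
    set p := Abelian.factorThruImage f
    set i := Abelian.image.ι f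
    have hnil : End.of (i ≫ p) ^ n = 0 := by
      rw [← cancel_epi p, ← cancel_mono i, Category.assoc, ← End.of_comp_pow_succ, hfac, hf]
      simp
    rw [← hfac, trC_comp_comm]
    exact ih hnil

lemma trC_eq_zero_of_isNilpotent [Abelian C] {X : C} {f : End X} (hf : IsNilpotent f) :
    trC (f : X ⟶ X) = 0 := by
  obtain ⟨n, hn⟩ := hf
  exact trC_eq_zero_of_pow_eq_zero hn

theorem stmt8_general [Abelian C] (J : C)
    (χ : End J →+* End (𝟙_ C))
    (hnil : ∀ f : End J, χ f = 0 → IsNilpotent f) :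
    ∀ f : End J, χ f = 0 → trC f = 0 :=
  fun f hf ↦ trC_eq_zero_of_isNilpotent (hnil f hf)

theorem stmt8 [Abelian C] (hK : IsField (End (𝟙_ C))) (J : C)
    (χ : End J →+* End (𝟙_ C)) (hsurj : Function.Surjective χ)
    (hnil : ∀ f : End J, χ f = 0 → IsNilpotent f) :
    ∀ f : End J, χ f = 0 → trC f = 0 :=
  stmt8_general J χ hnil
end

section
/- Let C be a ribbon Ab-category with K = End(1) a field, J an ambidextrous object, and V ∈ I_J. If the modified dimension d_J(V) ≠ 0, then I_V = I_J. -/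
open CategoryTheory MonoidalCategory

universe v u

variable {C : Type u} [Category.{v} C] [MonoidalCategory C]
  [BraidedCategory C] [RightRigidCategory C]

variable [RibbonTwist C]

open RibbonTwist

/-- An ambidextrous object: `J` is absolutely indecomposable, encoded by the
canonical projection `χ : End(J) → End(𝟙) = K` (a surjective ring homomorphism
whose kernel, the radical, consists of nilpotent elements), and `χ` is an
ambidextrous trace on `J`. -/
structure AmbiObj [Preadditive C] (J : C) where
  χ : End J →+* End (𝟙_ C)
  surjective : Function.Surjective χ
  nilpotent_ker : ∀ f : End J, χ f = 0 → IsNilpotent f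
  ambi : ∀ f : J ⊗ J ⟶ J ⊗ J, χ (trL f) = χ (trR f)

/- `J` is absolutely indecomposable, so the radical of `End J` is nil and `End J` is local:
an endomorphism is invertible as soon as its image in `K` is. If `d_J(V) ≠ 0`, then
`tr_R (β ∘ α)` is invertible, and since it factors through `V ⊗ W*`, `J` is a retract of
`V ⊗ W*`. Hence `J ∈ I_V`, and `V ∈ I_J` by assumption, so the two ideals coincide. -/

theorem isLocalHom_of_surjective_of_isNilpotent_ker {R S : Type*} [Ring R] [Ring S]
    (χ : R →+* S) (hχ : Function.Surjective χ) (hker : ∀ f, χ f = 0 → IsNilpotent f) :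
    IsLocalHom χ where
  map_nonunit f hf := by
    obtain ⟨u, hu⟩ := hf
    obtain ⟨g, hg⟩ := hχ ↑u⁻¹
    have isUnit_of_one_sub_mem_ker {x : R} (hx : χ (1 - x) = 0) : IsUnit x := by
      simpa using (hker _ hx).isUnit_one_sub
    have hgf : IsUnit (g * f) :=
      isUnit_of_one_sub_mem_ker (by rw [map_sub, map_one, map_mul, hg, ← hu, u.inv_mul, sub_self])
    have hfg : IsUnit (f * g) :=
      isUnit_of_one_sub_mem_ker (by rw [map_sub, map_one, map_mul, hg, ← hu, u.mul_inv, sub_self])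
    obtain ⟨l, hl⟩ := hgf.exists_left_inv
    obtain ⟨r, hr⟩ := hfg.exists_right_inv
    have hl' : l * g * f = 1 := by rw [mul_assoc, hl]
    have hr' : f * (g * r) = 1 := by rw [← mul_assoc, hr]
    exact ⟨⟨f, g * r, hr', left_inv_eq_right_inv hl' hr' ▸ hl'⟩, rfl⟩

theorem AmbiObj.isUnit_of_χ_ne_zero [Preadditive C] (hK : IsField (End (𝟙_ C))) {J : C}
    (A : AmbiObj J) {f : End J} (hf : A.χ f ≠ 0) : IsUnit f := by
  have := isLocalHom_of_surjective_of_isNilpotent_ker A.χ A.surjective A.nilpotent_ker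
  obtain ⟨c, hc⟩ := hK.mul_inv_cancel hf
  exact IsUnit.of_map A.χ f ⟨⟨A.χ f, c, hc, hK.mul_comm c _ ▸ hc⟩, rfl⟩

section Ideal

omit [BraidedCategory C] [RightRigidCategory C] [RibbonTwist C]

theorem InI.trans {A B U : C} (hAB : InI A B) (hBU : InI B U) : InI A U := by
  obtain ⟨Y, a, b, hab⟩ := hAB
  obtain ⟨X, α, β, hαβ⟩ := hBU
  refine ⟨Y ⊗ X, α ≫ a ▷ X ≫ (α_ A Y X).hom, (α_ A Y X).inv ≫ b ▷ X ≫ β, ?_⟩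
  simp only [Category.assoc, Iso.hom_inv_id_assoc]
  rw [← comp_whiskerRight_assoc, hab, id_whiskerRight, Category.id_comp, hαβ]

theorem inI_of_isUnit_comp {V J X : C} (a : J ⟶ V ⊗ X) (b : V ⊗ X ⟶ J)
    (h : IsUnit (M := End J) (a ≫ b)) : InI V J := by
  obtain ⟨u, hu⟩ := h
  refine ⟨X, (u⁻¹ : (End J)ˣ).val ≫ a, b, ?_⟩
  rw [Category.assoc, ← hu]
  exact u.mul_inv

end Ideal

theorem trR_comp_eq {J V W : C} (α : V ⟶ J ⊗ W) (β : J ⊗ W ⟶ V) :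
    trR (β ≫ α) = ((ρ_ J).inv ≫ J ◁ η_ W Wᘁ ≫ (α_ J W Wᘁ).inv ≫ β ▷ Wᘁ) ≫
      (α ▷ Wᘁ ≫ (α_ J W Wᘁ).hom ≫ J ◁ ev' W ≫ (ρ_ J).hom) := by
  simp only [trR, comp_whiskerRight, Category.assoc]

theorem stmt10 [Preadditive C] (hK : IsField (End (𝟙_ C))) (J : C) (A : AmbiObj J)
    (V W : C) (α : V ⟶ J ⊗ W) (β : J ⊗ W ⟶ V) (hαβ : α ≫ β = 𝟙 V)
    (hd : A.χ (trR (β ≫ α)) ≠ 0) :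
    ∀ U : C, InI V U ↔ InI J U := by
  have hJV : InI J V := ⟨W, α, β, hαβ⟩
  have hVJ : InI V J := by
    have hunit := A.isUnit_of_χ_ne_zero hK hd
    rw [trR_comp_eq] at hunit
    exact inI_of_isUnit_comp (X := Wᘁ) _ _ hunit
  exact fun U => ⟨hJV.trans, hVJ.trans⟩
end

section
/- Let k be an algebraically closed field of characteristic 2 and A = kC_2 the group algebra of the cyclic group of order 2, viewed as a module over itself. Then the canonical trace ⟨·⟩ : End(A) → k is not an ambidextrous trace: there exists f ∈ End_{kC_2}(A ⊗ A) with ⟨tr_L(f)⟩ = 1 but ⟨tr_R(f)⟩ = 0. -/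
/-! The witness is `f (x ⊗ y) = ε x • w y`, where `ε` is the augmentation and `w` is the module
map `h ↦ h ⊗ hg`; it is equivariant because both `ε` and `w` are (the latter only in
characteristic `2`). For any `f` of this shape, `tr_L f = (ε ⊗ id) ∘ w` independently of the
basis, and `(ε ⊗ id)(w v₁) = v₁`, whereas `tr_R f` is a multiple of `ε`, which kills the socle
vector `v₁`. -/

open TensorProduct

/-- The right partial trace of `f : V ⊗ V → V ⊗ V`, computed with respect to the
basis `b`:  `tr_R(f)(v) = ∑ i (id ⊗ b.coord i)(f(v ⊗ b i))`. -/
noncomputable def ptrR {k : Type*} [Field k] {V : Type*} [AddCommGroup V] [Module k V]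
    {ι : Type*} [Fintype ι] (b : Module.Basis ι k V)
    (f : V ⊗[k] V →ₗ[k] V ⊗[k] V) : V →ₗ[k] V :=
  ∑ i : ι, (TensorProduct.rid k V).toLinearMap
      ∘ₗ (TensorProduct.map LinearMap.id (b.coord i))
      ∘ₗ f ∘ₗ ((TensorProduct.mk k V V).flip (b i))

/-- The left partial trace of `f : V ⊗ V → V ⊗ V`, computed with respect to the
basis `b`:  `tr_L(f)(v) = ∑ i (b.coord i ⊗ id)(f(b i ⊗ v))`. -/
noncomputable def ptrL {k : Type*} [Field k] {V : Type*} [AddCommGroup V] [Module k V]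
    {ι : Type*} [Fintype ι] (b : Module.Basis ι k V)
    (f : V ⊗[k] V →ₗ[k] V ⊗[k] V) : V →ₗ[k] V :=
  ∑ i : ι, (TensorProduct.lid k V).toLinearMap
      ∘ₗ (TensorProduct.map (b.coord i) LinearMap.id)
      ∘ₗ f ∘ₗ (TensorProduct.mk k V V (b i))

/-- The action of the generator `g` of `C₂` on the regular module `A = kC₂`,
in the basis `v₁, v₂` with `g⬝v₁ = v₁` and `g⬝v₂ = v₁ + v₂`. -/
noncomputable def gAct (k : Type*) [Field k] : (Fin 2 → k) →ₗ[k] (Fin 2 → k) :=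
  Matrix.toLin' !![1, 1; 0, 1]

section ThroughLeftUnit

variable {k V : Type*} [Field k] [AddCommGroup V] [Module k V]

noncomputable def throughLeftUnit (ε : V →ₗ[k] k) (w : V →ₗ[k] V ⊗[k] V) :
    V ⊗[k] V →ₗ[k] V ⊗[k] V :=
  w ∘ₗ (TensorProduct.lid k V).toLinearMap ∘ₗ TensorProduct.map ε LinearMap.id

variable (ε : V →ₗ[k] k) (w : V →ₗ[k] V ⊗[k] V)

@[simp]
lemma throughLeftUnit_tmul (x y : V) : throughLeftUnit ε w (x ⊗ₜ y) = ε x • w y := by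
  simp [throughLeftUnit]

lemma throughLeftUnit_comp_map_comm {g : V →ₗ[k] V} (hε : ε ∘ₗ g = ε)
    (hw : w ∘ₗ g = TensorProduct.map g g ∘ₗ w) :
    throughLeftUnit ε w ∘ₗ TensorProduct.map g g
      = TensorProduct.map g g ∘ₗ throughLeftUnit ε w := by
  refine TensorProduct.ext' fun x y => ?_
  simp only [LinearMap.comp_apply, TensorProduct.map_tmul, throughLeftUnit_tmul, map_smul]
  rw [← LinearMap.comp_apply ε, hε, ← LinearMap.comp_apply w, hw, LinearMap.comp_apply]

variable {ι : Type*} [Fintype ι] (b : Module.Basis ι k V)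

lemma ptrL_throughLeftUnit :
    ptrL b (throughLeftUnit ε w)
      = (TensorProduct.lid k V).toLinearMap ∘ₗ TensorProduct.map ε LinearMap.id ∘ₗ w := by
  ext v
  simp only [ptrL, LinearMap.sum_apply, LinearMap.comp_apply, TensorProduct.mk_apply,
    throughLeftUnit_tmul, map_smul]
  induction w v using TensorProduct.induction_on with
  | zero => simp
  | tmul x y =>
    have hx : ∑ i, ε (b i) * b.repr x i = ε x := by
      simpa only [LinearMap.sum_apply, LinearMap.smul_apply,
        Module.Basis.coord_apply, smul_eq_mul] using
        LinearMap.congr_fun (b.sum_dual_apply_smul_coord ε) x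
    simp [smul_smul, ← Finset.sum_smul, hx]
  | add z z' hz hz' => simp_all [Finset.sum_add_distrib]

lemma ptrR_throughLeftUnit_apply (v : V) :
    ptrR b (throughLeftUnit ε w) v
      = ε v • ∑ i, TensorProduct.rid k V (TensorProduct.map LinearMap.id (b.coord i) (w (b i))) := by
  simp [ptrR, Finset.smul_sum]

end ThroughLeftUnit

section RegularModule

variable (k : Type*) [Field k]

local notation "v₁" => (Pi.single 0 1 : Fin 2 → k)
local notation "v₂" => (Pi.single 1 1 : Fin 2 → k)

lemma gAct_v₁ : gAct k v₁ = v₁ := by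
  ext i; fin_cases i <;> simp [gAct, Matrix.mulVec, dotProduct]

lemma gAct_v₂ : gAct k v₂ = v₁ + v₂ := by
  ext i; fin_cases i <;> simp [gAct, Matrix.mulVec, dotProduct]

lemma proj_one_comp_gAct : LinearMap.proj 1 ∘ₗ gAct k = LinearMap.proj 1 := by
  ext x; simp [gAct, Matrix.mulVec, dotProduct]

/-- With `v₂ = 1` and `v₁ = 1 + g`, this is `h ↦ h ⊗ hg` on group elements, and
`LinearMap.proj 1` is the augmentation. -/
noncomputable def shiftedDiag : (Fin 2 → k) →ₗ[k] (Fin 2 → k) ⊗[k] (Fin 2 → k) :=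
  (Pi.basisFun k (Fin 2)).constr k ![v₁ ⊗ₜ v₂ + v₂ ⊗ₜ v₁, v₂ ⊗ₜ v₁ + v₂ ⊗ₜ v₂]

lemma shiftedDiag_v₁ : shiftedDiag k v₁ = v₁ ⊗ₜ v₂ + v₂ ⊗ₜ v₁ := by
  simp [shiftedDiag, -Pi.basisFun_apply]

lemma shiftedDiag_v₂ : shiftedDiag k v₂ = v₂ ⊗ₜ v₁ + v₂ ⊗ₜ v₂ := by
  simp [shiftedDiag, -Pi.basisFun_apply]

lemma shiftedDiag_comp_gAct [CharP k 2] :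
    shiftedDiag k ∘ₗ gAct k = TensorProduct.map (gAct k) (gAct k) ∘ₗ shiftedDiag k := by
  refine (Pi.basisFun k (Fin 2)).ext fun i => ?_
  fin_cases i <;>
    simp only [LinearMap.comp_apply, Fin.zero_eta, Fin.mk_one, Pi.basisFun_apply, gAct_v₁, gAct_v₂,
      map_add, shiftedDiag_v₁, shiftedDiag_v₂, TensorProduct.map_tmul, TensorProduct.add_tmul,
      TensorProduct.tmul_add]
  all_goals linear_combination (norm := module) -(CharTwo.two_eq_zero (R := k) • v₁ ⊗ₜ[k] v₁)

end RegularModule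

theorem stmt16_general (k : Type*) [Field k] [CharP k 2] :
    ∃ f : (Fin 2 → k) ⊗[k] (Fin 2 → k) →ₗ[k] (Fin 2 → k) ⊗[k] (Fin 2 → k),
      f ∘ₗ TensorProduct.map (gAct k) (gAct k)
          = TensorProduct.map (gAct k) (gAct k) ∘ₗ f ∧
      ptrL (Pi.basisFun k (Fin 2)) f (Pi.single 0 1) = (Pi.single 0 1 : Fin 2 → k) ∧
      ptrR (Pi.basisFun k (Fin 2)) f (Pi.single 0 1) = (0 : Fin 2 → k) := by
  refine ⟨throughLeftUnit (LinearMap.proj 1) (shiftedDiag k),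
    throughLeftUnit_comp_map_comm _ _ (proj_one_comp_gAct k) (shiftedDiag_comp_gAct k), ?_, ?_⟩
  · simp [ptrL_throughLeftUnit, shiftedDiag_v₁]
  · simp [ptrR_throughLeftUnit_apply]

/-- The regular module `A = kC₂` over an algebraically closed field of
characteristic `2` does not admit the canonical trace as an ambidextrous trace:
there is a `kC₂`-endomorphism `f` of `A ⊗ A` (an endomorphism commuting with the
diagonal action `g ⊗ g` of the generator) with `⟨tr_L f⟩ = 1` and `⟨tr_R f⟩ = 0`,
where the canonical trace `⟨φ⟩` is characterized by `φ(v₁) = ⟨φ⟩ ⬝ v₁` (the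
socle of `A` being spanned by `v₁`). -/
theorem stmt16 (k : Type*) [Field k] [IsAlgClosed k] [CharP k 2] :
    ∃ f : (Fin 2 → k) ⊗[k] (Fin 2 → k) →ₗ[k] (Fin 2 → k) ⊗[k] (Fin 2 → k),
      f ∘ₗ TensorProduct.map (gAct k) (gAct k)
          = TensorProduct.map (gAct k) (gAct k) ∘ₗ f ∧
      ptrL (Pi.basisFun k (Fin 2)) f (Pi.single 0 1) = (Pi.single 0 1 : Fin 2 → k) ∧
      ptrR (Pi.basisFun k (Fin 2)) f (Pi.single 0 1) = (0 : Fin 2 → k) :=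
  stmt16_general k
end

section
/- Let k be an algebraically closed field of characteristic p > 2, g = sl_2(k), χ the regular nilpotent character (χ(H^p−H)=0, χ(E^p)=0, χ(F^p)=1), and V = V_{χ,0} the p-dimensional simple module with basis v_0, …, v_{p−1} on which H·v_i = −2i·v_i, F·v_i = v_{i+1} (indices mod p), E·v_i = i(1−i)·v_{i−1}. Then V is not ambidextrous: there exists a g-module endomorphism f of V ⊗ V which maps the symmetric part S²V into the exterior part Λ²V and satisfies tr_R(f) = −id_V ≠ 0, while tr_R(f) = −tr_L(f); hence the canonical trace on End(V) fails to be ambidextrous. -/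
open TensorProduct

/-- The action of `H` on the baby Verma module `V_{χ,0}`: `H⬝vᵢ = -2i⬝vᵢ`. -/
noncomputable def Hact (p : ℕ) (k : Type*) [Field k] : (Fin p → k) →ₗ[k] (Fin p → k) :=
  Matrix.toLin' (Matrix.diagonal fun i : Fin p => (-2 : k) * ((i : ℕ) : k))

/-- The action of `F` on `V_{χ,0}`: `F⬝vᵢ = v_{i+1}` (indices mod `p`). -/
noncomputable def Fact' (p : ℕ) [NeZero p] (k : Type*) [Field k] :
    (Fin p → k) →ₗ[k] (Fin p → k) :=
  Matrix.toLin' (fun j i : Fin p => if j = i + 1 then (1 : k) else 0)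

/-- The action of `E` on `V_{χ,0}`: `E⬝vᵢ = i(1-i)⬝v_{i-1}` (indices mod `p`). -/
noncomputable def Eact (p : ℕ) [NeZero p] (k : Type*) [Field k] :
    (Fin p → k) →ₗ[k] (Fin p → k) :=
  Matrix.toLin' (fun j i : Fin p =>
    if j + 1 = i then ((i : ℕ) : k) * (1 - ((i : ℕ) : k)) else 0)

/-- The action of an element acting by `X` on the tensor square, via the
coproduct: `X ⊗ 1 + 1 ⊗ X`. -/
noncomputable def tAct {p : ℕ} {k : Type*} [Field k]
    (X : (Fin p → k) →ₗ[k] (Fin p → k)) :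
    (Fin p → k) ⊗[k] (Fin p → k) →ₗ[k] (Fin p → k) ⊗[k] (Fin p → k) :=
  TensorProduct.map X LinearMap.id + TensorProduct.map LinearMap.id X

/-!
The vectors `wedgeVec s = ∑ₐ wedgeCoeff s a • vₐ ⊗ v_{s-a}` are antisymmetric, of weight `-2s`,
and satisfy `F • wedgeVec s = c_s • wedgeVec (s + 1)` (with `c_0 = 2`, `c_s = 1` otherwise) and
`E • wedgeVec s = s(1 - s) • wedgeVec (s - 1)`: they span the copy of `V_{2χ,0}` in `Λ²V`.
The endomorphism `f` sends `vᵢ ⊗ vⱼ` to `projCoeff i j • wedgeVec (i + j)`.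

Compatibility with `F` is a cyclic Pascal identity. Compatibility with `E` comes for free: since
`[E, F] = H` and `f` commutes with `F` and `H`, the commutator `[f, E]` commutes with `F`, and the
vectors `v₀ ⊗ vⱼ` generate `V ⊗ V` under `F`, so it suffices to check `[f, E] = 0` on them.
In the same way the partial traces of `f` commute with `F`, and `V` is generated by `v₀` under `F`,
so `tr_R f` and `tr_L f` are the scalars read off at `v₀`: `∑ₛ wedgeCoeff s 0 = p - 1 = -1` and
`∑ₛ wedgeCoeff s s = 1 - p = 1`.
-/

theorem commute_commutator_of_commute {R : Type*} [Ring R] {f E F : R} (hF : Commute f F)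
    (hEF : Commute f (E * F - F * E)) : Commute (f * E - E * f) F := by
  have key : f * E * F - f * F * E = E * F * f - F * E * f := by
    simpa only [mul_sub, sub_mul, mul_assoc] using hEF.eq
  calc (f * E - E * f) * F = f * E * F - E * F * f := by
        rw [sub_mul, mul_assoc E f F, hF.eq, ← mul_assoc E F f]
    _ = f * F * E - F * E * f := sub_eq_sub_iff_sub_eq_sub.1 key
    _ = F * (f * E - E * f) := by rw [mul_sub, ← mul_assoc F f E, ← hF.eq, ← mul_assoc F E f]

section PartialTrace

variable {k : Type*} [Field k] {V : Type*} [AddCommGroup V] [Module k V]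
  {ι : Type*} [Fintype ι] (b : Module.Basis ι k V)

theorem ptrR_add (f g : V ⊗[k] V →ₗ[k] V ⊗[k] V) : ptrR b (f + g) = ptrR b f + ptrR b g := by
  simp only [ptrR, LinearMap.add_comp, LinearMap.comp_add, Finset.sum_add_distrib]

theorem ptrR_map_comp (X : V →ₗ[k] V) (f : V ⊗[k] V →ₗ[k] V ⊗[k] V) :
    ptrR b (map X LinearMap.id ∘ₗ f) = X ∘ₗ ptrR b f := by
  ext v
  simp only [ptrR, LinearMap.sum_apply, LinearMap.comp_apply, map_sum]
  refine Finset.sum_congr rfl fun i _ => ?_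
  have natural : (TensorProduct.rid k V).toLinearMap ∘ₗ map LinearMap.id (b.coord i) ∘ₗ
      map X LinearMap.id = X ∘ₗ (TensorProduct.rid k V).toLinearMap ∘ₗ
      map LinearMap.id (b.coord i) := TensorProduct.ext' fun x y => by simp
  exact LinearMap.congr_fun natural _

theorem ptrR_comp_map (X : V →ₗ[k] V) (f : V ⊗[k] V →ₗ[k] V ⊗[k] V) :
    ptrR b (f ∘ₗ map X LinearMap.id) = ptrR b f ∘ₗ X := by
  ext v
  simp [ptrR]

theorem ptrR_map_id_comp (X : V →ₗ[k] V) (f : V ⊗[k] V →ₗ[k] V ⊗[k] V) :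
    ptrR b (map LinearMap.id X ∘ₗ f) = ptrR b (f ∘ₗ map LinearMap.id X) := by
  have expand : ∀ (d : ι) (w : V ⊗[k] V),
      TensorProduct.rid k V (map LinearMap.id (b.coord d) (map LinearMap.id X w)) =
        ∑ j, b.coord d (X (b j)) • TensorProduct.rid k V (map LinearMap.id (b.coord j) w) := by
    intro d w
    induction w using TensorProduct.induction_on with
    | zero => simp
    | tmul x y =>
      have hy : X y = ∑ j, b.repr y j • X (b j) := by
        conv_lhs => rw [← b.sum_repr y]
        simp only [map_sum, map_smul]
      simp [hy, Finset.sum_smul, smul_smul, mul_comm]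
    | add w w' hw hw' => simp only [map_add, hw, hw', smul_add, Finset.sum_add_distrib]
  ext v
  simp only [ptrR, LinearMap.sum_apply, LinearMap.comp_apply, LinearMap.flip_apply, mk_apply,
    LinearEquiv.coe_coe, expand, map_tmul, LinearMap.id_apply]
  conv_rhs => enter [2, d]; rw [← b.sum_repr (X (b d))]
  simp only [tmul_sum, tmul_smul, map_sum, map_smul, Module.Basis.coord_apply]
  exact Finset.sum_comm

theorem ptrR_comp_commute {X : V →ₗ[k] V} {f : V ⊗[k] V →ₗ[k] V ⊗[k] V}
    (hf : f ∘ₗ (map X LinearMap.id + map LinearMap.id X) =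
      (map X LinearMap.id + map LinearMap.id X) ∘ₗ f) :
    ptrR b f ∘ₗ X = X ∘ₗ ptrR b f :=
  calc ptrR b f ∘ₗ X = ptrR b (f ∘ₗ map X LinearMap.id) := (ptrR_comp_map b X f).symm
    _ = ptrR b (f ∘ₗ (map X LinearMap.id + map LinearMap.id X)) -
          ptrR b (f ∘ₗ map LinearMap.id X) := by
      rw [LinearMap.comp_add, ptrR_add, add_sub_cancel_right]
    _ = ptrR b ((map X LinearMap.id + map LinearMap.id X) ∘ₗ f) -
          ptrR b (map LinearMap.id X ∘ₗ f) := by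
      rw [hf, ptrR_map_id_comp]
    _ = ptrR b (map X LinearMap.id ∘ₗ f) := by
      rw [LinearMap.add_comp, ptrR_add, add_sub_cancel_right]
    _ = X ∘ₗ ptrR b f := ptrR_map_comp b X f

theorem ptrL_eq_ptrR_comm (f : V ⊗[k] V →ₗ[k] V ⊗[k] V) :
    ptrL b f = ptrR b ((TensorProduct.comm k V V).toLinearMap ∘ₗ f ∘ₗ
      (TensorProduct.comm k V V).toLinearMap) := by
  have natural : ∀ i, (TensorProduct.lid k V).toLinearMap ∘ₗ map (b.coord i) LinearMap.id =
      (TensorProduct.rid k V).toLinearMap ∘ₗ map LinearMap.id (b.coord i) ∘ₗ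
        (TensorProduct.comm k V V).toLinearMap := fun i => TensorProduct.ext' fun x y => by simp
  ext v
  simp only [ptrL, ptrR, LinearMap.sum_apply, LinearMap.comp_apply, LinearMap.flip_apply,
    mk_apply, LinearEquiv.coe_coe, comm_tmul]
  exact Finset.sum_congr rfl fun i _ => LinearMap.congr_fun (natural i) _

theorem comm_comp_map_add_map (X : V →ₗ[k] V) :
    (TensorProduct.comm k V V).toLinearMap ∘ₗ (map X LinearMap.id + map LinearMap.id X) =
      (map X LinearMap.id + map LinearMap.id X) ∘ₗ (TensorProduct.comm k V V).toLinearMap :=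
  TensorProduct.ext' fun x y => by simp [add_comm]

theorem ptrL_comp_commute {X : V →ₗ[k] V} {f : V ⊗[k] V →ₗ[k] V ⊗[k] V}
    (hf : f ∘ₗ (map X LinearMap.id + map LinearMap.id X) =
      (map X LinearMap.id + map LinearMap.id X) ∘ₗ f) :
    ptrL b f ∘ₗ X = X ∘ₗ ptrL b f := by
  rw [ptrL_eq_ptrR_comm]
  refine ptrR_comp_commute b (LinearMap.ext fun x => ?_)
  have hcomm := LinearMap.congr_fun (comm_comp_map_add_map X)
  have hfx := LinearMap.congr_fun hf
  simp only [LinearMap.comp_apply] at hcomm hfx ⊢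
  rw [hcomm, hfx, hcomm]

end PartialTrace

namespace BabyVerma

open Fin.CommRing

section Residues

variable {p : ℕ} {k : Type*} [Field k]

theorem natCast_val_add [CharP k p] (x y : Fin p) :
    (((x + y : Fin p) : ℕ) : k) = (x : ℕ) + (y : ℕ) := by
  rw [Fin.val_add, ← CharP.cast_eq_mod, Nat.cast_add]

variable [NeZero p]

theorem natCast_val_one [CharP k p] : (((1 : Fin p) : ℕ) : k) = 1 := by
  rw [Fin.val_one', ← CharP.cast_eq_mod, Nat.cast_one]

theorem natCast_val_sub [CharP k p] (x y : Fin p) :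
    (((x - y : Fin p) : ℕ) : k) = (x : ℕ) - (y : ℕ) := by
  rw [eq_sub_iff_add_eq, ← natCast_val_add, sub_add_cancel]

theorem val_neg_one : ((-1 : Fin p) : ℕ) = p - 1 := by
  obtain ⟨n, rfl⟩ := Nat.exists_eq_succ_of_ne_zero (NeZero.ne p)
  simp [Fin.coe_neg_one]

theorem val_add_one_of_ne_neg_one {x : Fin p} (hx : x ≠ -1) : ((x + 1 : Fin p) : ℕ) = x + 1 := by
  obtain ⟨n, rfl⟩ := Nat.exists_eq_succ_of_ne_zero (NeZero.ne p)
  refine Fin.val_add_one_of_lt ((Fin.lt_last_iff_ne_last).2 ?_)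
  rintro rfl
  exact hx (by simp [eq_neg_iff_add_eq_zero])

theorem val_lt_of_ne_neg_one {x : Fin p} (hx : x ≠ -1) : (x : ℕ) < p - 1 := by
  have h : (x : ℕ) ≠ p - 1 := fun h => hx (Fin.ext (h.trans val_neg_one.symm))
  have := x.isLt
  omega

theorem neg_one_pow_val_sub_one (hodd : Odd p) (a : Fin p) :
    (-1 : k) ^ ((a - 1 : Fin p) : ℕ) = if a = 0 then 1 else -(-1) ^ (a : ℕ) := by
  by_cases ha : a = 0
  · rw [if_pos ha, ha, zero_sub, val_neg_one, (Nat.Odd.sub_odd hodd odd_one).neg_one_pow]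
  · obtain ⟨m, hm⟩ := Nat.exists_eq_succ_of_ne_zero (Fin.val_ne_iff.2 ha)
    rw [if_neg ha, Fin.val_sub_one_of_ne_zero ha, hm, Nat.succ_sub_one, pow_succ]
    ring

end Residues

section Binomial

variable {p : ℕ} {k : Type*} [Field k]

theorem natCast_choose_pred_prime [CharP k p] (hp : p.Prime) {m : ℕ} (hm : m < p) :
    ((p - 1).choose m : k) = (-1) ^ m := by
  induction m with
  | zero => simp
  | succ m ih =>
    have pascal : p.choose (m + 1) = (p - 1).choose m + (p - 1).choose (m + 1) := by
      conv_lhs => rw [← Nat.sub_add_cancel hp.one_le]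
      exact Nat.choose_succ_succ' (p - 1) m
    have hdvd : ((p.choose (m + 1) : ℕ) : k) = 0 :=
      (CharP.cast_eq_zero_iff k p _).2 (hp.dvd_choose_self m.succ_ne_zero hm)
    rw [pascal, Nat.cast_add, ih (by omega)] at hdvd
    rw [pow_succ]
    linear_combination hdvd

variable (k) in
/-- `C(x, a)` for residues `x, a` mod `p`, computed on their representatives in `[0, p)`. -/
def finChoose (x a : Fin p) : k := ((x : ℕ).choose a : ℕ)

theorem finChoose_self (x : Fin p) : finChoose k x x = 1 := by
  simp [finChoose]

theorem finChoose_sub (x a : Fin p) : finChoose k x (x - a) = finChoose k x a := by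
  unfold finChoose
  rcases le_or_gt a x with h | h
  · rw [Fin.coe_sub_iff_le.2 h, Nat.choose_symm h]
  · have := a.isLt
    rw [Fin.coe_sub_iff_lt.2 h, Nat.choose_eq_zero_of_lt (by omega), Nat.choose_eq_zero_of_lt h]

variable [NeZero p]

theorem finChoose_zero_left (a : Fin p) : finChoose k 0 a = if a = 0 then 1 else 0 := by
  by_cases ha : a = 0
  · simp [finChoose, ha]
  · simp [finChoose, ha, Nat.choose_eq_zero_of_lt (Nat.pos_of_ne_zero (Fin.val_ne_iff.2 ha))]

theorem finChoose_neg_one_right (x : Fin p) :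
    finChoose k x (-1) = if x = -1 then 1 else 0 := by
  by_cases hx : x = -1
  · simp [hx, finChoose_self]
  · rw [if_neg hx, finChoose, val_neg_one, Nat.choose_eq_zero_of_lt (val_lt_of_ne_neg_one hx),
      Nat.cast_zero]

theorem finChoose_neg_one_left [CharP k p] (hp : p.Prime) (a : Fin p) :
    finChoose k (-1) a = (-1) ^ (a : ℕ) := by
  rw [finChoose, val_neg_one, natCast_choose_pred_prime hp a.isLt]

/-- At `a = 0` the last term is `C(x, p - 1)`, which vanishes as `x < p - 1`. -/
theorem finChoose_add_one {x : Fin p} (hx : x ≠ -1) (a : Fin p) :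
    finChoose k (x + 1) a = finChoose k x a + finChoose k x (a - 1) := by
  unfold finChoose
  rw [val_add_one_of_ne_neg_one hx]
  by_cases ha : a = 0
  · rw [ha, zero_sub, val_neg_one, Nat.choose_eq_zero_of_lt (val_lt_of_ne_neg_one hx)]
    simp
  · obtain ⟨m, hm⟩ := Nat.exists_eq_succ_of_ne_zero (Fin.val_ne_iff.2 ha)
    rw [Fin.val_sub_one_of_ne_zero ha, hm, Nat.choose_succ_succ', Nat.succ_sub_one]
    push_cast
    ring

end Binomial

section Coefficients

variable {p : ℕ} [NeZero p] (k : Type*) [Field k]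

/-- For `s ≠ 0` these are the coefficients of `(1 - x)(1 + x)^(s-1)`; for `s = 0` they are
`2(-1)^a` (`a ≠ 0`) and `0`, the coefficients of `(1 - x)(1 + x)^(p-1)` modulo `x^p - 1`. -/
def wedgeCoeff (s a : Fin p) : k := finChoose k (s - 1) a - finChoose k (s - 1) (a - 1)

/-- `1` if `i = 0` or `j = 0`, else `(-1)^(p-j) C(i-1, p-j)`, which vanishes unless `i + j > p`. -/
def projCoeff (i j : Fin p) : k := (-1) ^ ((-j : Fin p) : ℕ) * finChoose k (i - 1) (-j)

def fCoeff (s : Fin p) : k := if s = 0 then 2 else 1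

def eCoeff (s : Fin p) : k := (s : ℕ) * (1 - (s : ℕ))

variable {k}

theorem wedgeCoeff_sub (s a : Fin p) : wedgeCoeff k s (s - a) = -wedgeCoeff k s a := by
  unfold wedgeCoeff
  rw [show s - a - 1 = (s - 1) - a by ring, show s - a = (s - 1) - (a - 1) by ring,
    finChoose_sub, finChoose_sub]
  ring

theorem projCoeff_zero_right (i : Fin p) : projCoeff k i 0 = 1 := by
  simp [projCoeff, finChoose]

variable [CharP k p]

theorem projCoeff_zero_left (hp : p.Prime) (j : Fin p) : projCoeff k 0 j = 1 := by
  rw [projCoeff, zero_sub, finChoose_neg_one_left hp, ← mul_pow]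
  norm_num

theorem wedgeCoeff_sub_one_add (hp : p.Prime) (hodd : Odd p) (s a : Fin p) :
    wedgeCoeff k s (a - 1) + wedgeCoeff k s a = fCoeff k s * wedgeCoeff k (s + 1) a := by
  unfold wedgeCoeff fCoeff
  by_cases hs : s = 0
  · rw [if_pos hs, hs, zero_add, zero_sub, sub_self, finChoose_neg_one_left hp,
      finChoose_neg_one_left hp, finChoose_neg_one_left hp, neg_one_pow_val_sub_one hodd,
      neg_one_pow_val_sub_one hodd, neg_one_pow_val_sub_one hodd, finChoose_zero_left,
      finChoose_zero_left]
    by_cases ha : a = 0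
    · simp [ha, hp.one_lt.ne']
      norm_num
    by_cases ha1 : a = 1
    · simp [ha1, hp.one_lt.ne', Nat.mod_eq_of_lt hp.one_lt]
      ring
    · simp [ha, ha1, sub_eq_zero]
  · have hx : s - 1 ≠ -1 := fun h => hs (by simpa using h)
    rw [if_neg hs, show s + 1 - 1 = (s - 1) + 1 by ring, finChoose_add_one hx,
      finChoose_add_one hx]
    ring

theorem projCoeff_add_one_add (hp : p.Prime) (hodd : Odd p) (i j : Fin p) :
    projCoeff k (i + 1) j + projCoeff k i (j + 1) = fCoeff k (i + j) * projCoeff k i j := by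
  unfold projCoeff fCoeff
  rw [add_sub_cancel_right, neg_add', show i + j = i - -j by ring]
  generalize -j = b
  by_cases hb : b = 0
  · have hsign : (-1 : k) ^ ((-1 : Fin p) : ℕ) = 1 := by
      rw [val_neg_one, (Nat.Odd.sub_odd hodd odd_one).neg_one_pow]
    subst hb
    rw [zero_sub, hsign, finChoose_neg_one_right, sub_zero]
    by_cases hi : i = 0 <;> simp [finChoose, hi]
    norm_num
  rw [neg_one_pow_val_sub_one hodd, if_neg hb]
  by_cases hi : i = 0
  · subst hi
    rw [zero_sub, zero_sub, if_neg (neg_ne_zero.2 hb), finChoose_neg_one_left hp,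
      finChoose_neg_one_left hp, neg_one_pow_val_sub_one hodd, if_neg hb, finChoose_zero_left,
      if_neg hb]
    ring
  · have hx : i - 1 ≠ -1 := fun h => hi (by simpa using h)
    have hi' : i = (i - 1) + 1 := by ring
    have hvanish : finChoose k (i - 1) i = 0 := by
      have h := finChoose_sub (k := k) (i - 1) (-1)
      rwa [sub_neg_eq_add, ← hi', finChoose_neg_one_right, if_neg hx] at h
    conv_lhs => rw [hi', finChoose_add_one hx, ← hi']
    split_ifs with hib
    · rw [sub_eq_zero.1 hib] at hvanish ⊢
      rw [hvanish]
      ring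
    · ring

theorem fCoeff_mul_eCoeff_add_one (s : Fin p) :
    fCoeff k s * eCoeff k (s + 1) = eCoeff k s * fCoeff k (s - 1) - 2 * (s : ℕ) := by
  rw [eCoeff, eCoeff, natCast_val_add, natCast_val_one, fCoeff, fCoeff]
  by_cases hs : s = 0
  · simp [hs]
  by_cases hs1 : s - 1 = 0
  · rw [if_neg hs, if_pos hs1, sub_eq_zero.1 hs1, natCast_val_one]
    ring
  · rw [if_neg hs, if_neg hs1]
    ring

theorem fCoeff_ne_zero (hodd : Odd p) (s : Fin p) : fCoeff k s ≠ 0 := by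
  have two_ne_zero : (2 : k) ≠ 0 := Ring.two_ne_zero <| by
    rw [ringChar.eq k p]
    rintro rfl
    exact Nat.not_odd_iff_even.2 even_two hodd
  unfold fCoeff
  split_ifs <;> simp [two_ne_zero]

theorem sum_wedgeCoeff_zero : ∑ s : Fin p, wedgeCoeff k s 0 = -1 := by
  have hterm : ∀ s : Fin p, wedgeCoeff k s 0 = 1 - if s = 0 then 1 else 0 := fun s => by
    rw [wedgeCoeff, zero_sub, finChoose_neg_one_right]
    simp [finChoose, sub_eq_neg_self]
  simp [hterm, Finset.sum_sub_distrib]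

theorem sum_wedgeCoeff_self : ∑ s : Fin p, wedgeCoeff k s s = 1 := by
  have hterm : ∀ s : Fin p, wedgeCoeff k s s = (if s = 0 then 1 else 0) - 1 := fun s => by
    have h := finChoose_sub (k := k) (s - 1) (-1)
    rw [sub_neg_eq_add, sub_add_cancel, finChoose_neg_one_right] at h
    rw [wedgeCoeff, h, finChoose_self]
    simp [sub_eq_neg_self]
  simp [hterm, Finset.sum_sub_distrib]

end Coefficients

theorem toLin'_single {n : ℕ} {k : Type*} [Field k] (M : Fin n → Fin n → k) (i : Fin n) :
    Matrix.toLin' M (Pi.single i 1) = fun j => M j i := by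
  change Matrix.toLin' (Matrix.of M) _ = _
  rw [Matrix.toLin'_apply, Matrix.mulVec_single_one]
  rfl

section Module

variable {p : ℕ} {k : Type*} [Field k]

theorem Hact_single (i : Fin p) :
    Hact p k (Pi.single i 1) = ((-2 : k) * (i : ℕ)) • Pi.single i 1 := by
  ext j
  by_cases h : j = i <;> simp [Hact, Matrix.toLin'_apply, Matrix.mulVec_single, h]

theorem tAct_tmul (X : (Fin p → k) →ₗ[k] (Fin p → k)) (x y : Fin p → k) :
    tAct X (x ⊗ₜ y) = X x ⊗ₜ y + x ⊗ₜ X y := by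
  simp [tAct]

theorem tAct_comp_sub (X Y : (Fin p → k) →ₗ[k] (Fin p → k)) :
    tAct X ∘ₗ tAct Y - tAct Y ∘ₗ tAct X = tAct (X ∘ₗ Y - Y ∘ₗ X) :=
  TensorProduct.ext' fun x y => by
    simp only [LinearMap.sub_apply, LinearMap.comp_apply, tAct_tmul, map_add, sub_tmul,
      tmul_sub]
    abel

theorem ext_single_tmul {M : Type*} [AddCommGroup M] [Module k M]
    {g h : (Fin p → k) ⊗[k] (Fin p → k) →ₗ[k] M}
    (hgh : ∀ i j, g (Pi.single i 1 ⊗ₜ Pi.single j 1) = h (Pi.single i 1 ⊗ₜ Pi.single j 1)) :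
    g = h :=
  ((Pi.basisFun k (Fin p)).tensorProduct (Pi.basisFun k (Fin p))).ext fun q => by
    rw [Module.Basis.tensorProduct_apply', Pi.basisFun_apply, Pi.basisFun_apply]
    exact hgh q.1 q.2

variable [NeZero p]

theorem Fact'_single (i : Fin p) : Fact' p k (Pi.single i 1) = Pi.single (i + 1) 1 := by
  rw [Fact', toLin'_single]
  ext j
  simp [Pi.single_apply]

theorem Eact_single (i : Fin p) :
    Eact p k (Pi.single i 1) = eCoeff k i • Pi.single (i - 1) 1 := by
  rw [Eact, toLin'_single]
  ext j
  have : j + 1 = i ↔ j = i - 1 := eq_sub_iff_add_eq.symm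
  by_cases h : j = i - 1 <;> simp [eCoeff, this, h]

theorem Eact_single_zero : Eact p k (Pi.single 0 1) = 0 := by
  simp [Eact_single, eCoeff]

theorem Eact_comp_Fact'_sub [CharP k p] :
    Eact p k ∘ₗ Fact' p k - Fact' p k ∘ₗ Eact p k = Hact p k := by
  refine (Pi.basisFun k (Fin p)).ext fun i => ?_
  simp only [Pi.basisFun_apply, LinearMap.sub_apply, LinearMap.comp_apply, Fact'_single,
    Eact_single, map_smul, Hact_single, add_sub_cancel_right, sub_add_cancel, ← sub_smul]
  congr 1
  rw [eCoeff, eCoeff, natCast_val_add, natCast_val_one]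
  ring

theorem tAct_Eact_comp_sub [CharP k p] :
    tAct (Eact p k) ∘ₗ tAct (Fact' p k) - tAct (Fact' p k) ∘ₗ tAct (Eact p k) =
      tAct (Hact p k) :=
  (tAct_comp_sub _ _).trans (congrArg tAct Eact_comp_Fact'_sub)

theorem eq_smul_id_of_comp_Fact' {T : (Fin p → k) →ₗ[k] (Fin p → k)}
    (hT : T ∘ₗ Fact' p k = Fact' p k ∘ₗ T) {c : k}
    (h0 : T (Pi.single 0 1) = c • Pi.single 0 1) :
    T = c • LinearMap.id := by
  have hn : ∀ n : ℕ, T (Pi.single (n : Fin p) 1) = c • Pi.single (n : Fin p) 1 := by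
    intro n
    induction n with
    | zero => simpa using h0
    | succ n ih =>
      rw [Nat.cast_succ, ← Fact'_single, ← LinearMap.comp_apply, hT, LinearMap.comp_apply, ih,
        map_smul]
  refine (Pi.basisFun k (Fin p)).ext fun i => ?_
  simpa using hn i

theorem eq_zero_of_comp_tAct_Fact'
    {D : (Fin p → k) ⊗[k] (Fin p → k) →ₗ[k] (Fin p → k) ⊗[k] (Fin p → k)}
    (hD : D ∘ₗ tAct (Fact' p k) = tAct (Fact' p k) ∘ₗ D)
    (h0 : ∀ j, D (Pi.single 0 1 ⊗ₜ Pi.single j 1) = 0) : D = 0 := by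
  have hn : ∀ (n : ℕ) j, D (Pi.single (n : Fin p) 1 ⊗ₜ Pi.single j 1) = 0 := by
    intro n
    induction n with
    | zero => simpa using h0
    | succ n ih =>
      intro j
      have hstep := LinearMap.congr_fun hD (Pi.single (n : Fin p) 1 ⊗ₜ Pi.single j 1)
      simp only [LinearMap.comp_apply, tAct_tmul, Fact'_single, map_add, ih, map_zero,
        add_zero] at hstep
      rw [Nat.cast_succ, hstep]
  refine ext_single_tmul fun i j => ?_
  simpa using hn i j

end Module

section Wedge

variable {p : ℕ} [NeZero p] {k : Type*} [Field k]

variable (k) in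
def wedgeVec (s : Fin p) : (Fin p → k) ⊗[k] (Fin p → k) :=
  ∑ a, wedgeCoeff k s a • (Pi.single a 1 ⊗ₜ Pi.single (s - a) 1)

theorem comm_wedgeVec (s : Fin p) :
    TensorProduct.comm k (Fin p → k) (Fin p → k) (wedgeVec k s) = -wedgeVec k s := by
  have reflect : Function.Involutive fun a : Fin p => s - a := fun a => sub_sub_cancel s a
  rw [wedgeVec, map_sum, ← Finset.sum_neg_distrib]
  refine Fintype.sum_equiv reflect.toPerm _ _ fun a => ?_
  rw [Function.Involutive.coe_toPerm, map_smul, comm_tmul, wedgeCoeff_sub, sub_sub_cancel]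
  module

theorem rid_map_coord_wedgeVec (s i : Fin p) :
    TensorProduct.rid k (Fin p → k)
        (map LinearMap.id ((Pi.basisFun k (Fin p)).coord i) (wedgeVec k s)) =
      wedgeCoeff k s (s - i) • Pi.single (s - i) 1 := by
  rw [wedgeVec, map_sum, map_sum, Finset.sum_eq_single (s - i)]
  · simp
  · intro a _ ha
    have : s - a ≠ i := fun h => ha (by rw [← h, sub_sub_cancel])
    simp [this]
  · simp

theorem lid_map_coord_wedgeVec (s i : Fin p) :
    TensorProduct.lid k (Fin p → k)
        (map ((Pi.basisFun k (Fin p)).coord i) LinearMap.id (wedgeVec k s)) =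
      wedgeCoeff k s i • Pi.single (s - i) 1 := by
  rw [wedgeVec, map_sum, map_sum, Finset.sum_eq_single i]
  · simp
  · intro a _ ha
    simp [ha]
  · simp

variable [CharP k p]

theorem tAct_Hact_wedgeVec (s : Fin p) :
    tAct (Hact p k) (wedgeVec k s) = ((-2 : k) * (s : ℕ)) • wedgeVec k s := by
  rw [wedgeVec, map_sum, Finset.smul_sum]
  refine Finset.sum_congr rfl fun a _ => ?_
  rw [map_smul, tAct_tmul, Hact_single, Hact_single, ← smul_tmul', tmul_smul, ← add_smul,
    smul_comm, natCast_val_sub]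
  congr 2
  ring

theorem tAct_Fact'_wedgeVec (hp : p.Prime) (hodd : Odd p) (s : Fin p) :
    tAct (Fact' p k) (wedgeVec k s) = fCoeff k s • wedgeVec k (s + 1) := by
  have shift : ∑ a, wedgeCoeff k s a •
        ((Pi.single (a + 1) 1 : Fin p → k) ⊗ₜ[k] (Pi.single (s - a) 1 : Fin p → k)) =
      ∑ a, wedgeCoeff k s (a - 1) •
        ((Pi.single a 1 : Fin p → k) ⊗ₜ[k] (Pi.single (s + 1 - a) 1 : Fin p → k)) :=
    Fintype.sum_equiv (Equiv.addRight 1) _ _ fun a => by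
      simp [show s + 1 - (a + 1) = s - a by ring]
  simp only [wedgeVec, map_sum, map_smul, tAct_tmul, Fact'_single, smul_add,
    Finset.sum_add_distrib, shift, Finset.smul_sum, smul_smul, ← wedgeCoeff_sub_one_add hp hodd,
    add_smul, show ∀ a : Fin p, s - a + 1 = s + 1 - a from fun a => by ring]

theorem tAct_Eact_wedgeVec_one : tAct (Eact p k) (wedgeVec k 1) = 0 := by
  rw [wedgeVec, map_sum]
  refine Finset.sum_eq_zero fun a _ => ?_
  have hE0 := Eact_single_zero (p := p) (k := k)
  have hE1 : Eact p k (Pi.single 1 1) = 0 := by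
    rw [Eact_single, eCoeff, natCast_val_one, sub_self, mul_zero, zero_smul]
  rw [map_smul, tAct_tmul]
  by_cases ha0 : a = 0
  · rw [ha0, sub_zero, hE0, hE1, zero_tmul, tmul_zero, add_zero, smul_zero]
  by_cases ha1 : a = 1
  · rw [ha1, sub_self, hE0, hE1, zero_tmul, tmul_zero, add_zero, smul_zero]
  · rw [wedgeCoeff, sub_self, finChoose_zero_left, finChoose_zero_left, if_neg ha0,
      if_neg (sub_ne_zero.2 ha1), sub_zero, zero_smul]

theorem tAct_Eact_wedgeVec_add_one (hp : p.Prime) (hodd : Odd p) {t : Fin p}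
    (ht : tAct (Eact p k) (wedgeVec k t) = eCoeff k t • wedgeVec k (t - 1)) :
    tAct (Eact p k) (wedgeVec k (t + 1)) = eCoeff k (t + 1) • wedgeVec k t := by
  have h := LinearMap.congr_fun tAct_Eact_comp_sub (wedgeVec k t)
  simp only [LinearMap.sub_apply, LinearMap.comp_apply, tAct_Fact'_wedgeVec hp hodd, ht,
    map_smul, tAct_Hact_wedgeVec, sub_add_cancel] at h
  refine smul_right_injective _ (fCoeff_ne_zero (k := k) hodd t) ?_
  dsimp only
  rw [eq_add_of_sub_eq h, smul_smul, smul_smul, fCoeff_mul_eCoeff_add_one]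
  module

theorem tAct_Eact_wedgeVec (hp : p.Prime) (hodd : Odd p) (s : Fin p) :
    tAct (Eact p k) (wedgeVec k s) = eCoeff k s • wedgeVec k (s - 1) := by
  have h : ∀ n : ℕ, tAct (Eact p k) (wedgeVec k ((n + 1 : ℕ) : Fin p)) =
      eCoeff k ((n + 1 : ℕ) : Fin p) • wedgeVec k (((n + 1 : ℕ) : Fin p) - 1) := by
    intro n
    induction n with
    | zero =>
      rw [zero_add, Nat.cast_one, tAct_Eact_wedgeVec_one, eCoeff, natCast_val_one, sub_self,
        mul_zero, zero_smul]
    | succ n ih =>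
      rw [Nat.cast_succ (n + 1), add_sub_cancel_right]
      exact tAct_Eact_wedgeVec_add_one hp hodd ih
  have hs := h (s - 1 : Fin p)
  rwa [Nat.cast_succ, Fin.cast_val_eq_self, sub_add_cancel] at hs

end Wedge

section Endomorphism

variable {p : ℕ} [NeZero p] {k : Type*} [Field k]

variable (p k) in
noncomputable def symToWedge : (Fin p → k) ⊗[k] (Fin p → k) →ₗ[k] (Fin p → k) ⊗[k] (Fin p → k) :=
  ((Pi.basisFun k (Fin p)).tensorProduct (Pi.basisFun k (Fin p))).constr k
    fun q => projCoeff k q.1 q.2 • wedgeVec k (q.1 + q.2)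

theorem symToWedge_single_tmul (i j : Fin p) :
    symToWedge p k (Pi.single i 1 ⊗ₜ Pi.single j 1) = projCoeff k i j • wedgeVec k (i + j) := by
  rw [symToWedge, ← Pi.basisFun_apply, ← Pi.basisFun_apply, ← Module.Basis.tensorProduct_apply,
    Module.Basis.constr_basis]

theorem comm_symToWedge (x : (Fin p → k) ⊗[k] (Fin p → k)) :
    TensorProduct.comm k _ _ (symToWedge p k x) = -symToWedge p k x := by
  have h : (TensorProduct.comm k (Fin p → k) (Fin p → k)).toLinearMap ∘ₗ symToWedge p k =
      -symToWedge p k := ext_single_tmul fun i j => by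
    simp [symToWedge_single_tmul, comm_wedgeVec]
  exact LinearMap.congr_fun h x

variable [CharP k p]

theorem symToWedge_comp_tAct_Hact :
    symToWedge p k ∘ₗ tAct (Hact p k) = tAct (Hact p k) ∘ₗ symToWedge p k :=
  ext_single_tmul fun i j => by
    simp only [LinearMap.comp_apply, tAct_tmul, Hact_single, map_smul, symToWedge_single_tmul,
      ← smul_tmul', tmul_smul, tAct_Hact_wedgeVec, smul_smul, ← add_smul, natCast_val_add]
    congr 1
    ring

theorem symToWedge_comp_tAct_Fact' (hp : p.Prime) (hodd : Odd p) :
    symToWedge p k ∘ₗ tAct (Fact' p k) = tAct (Fact' p k) ∘ₗ symToWedge p k :=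
  ext_single_tmul fun i j => by
    simp only [LinearMap.comp_apply, tAct_tmul, Fact'_single, map_add, map_smul,
      symToWedge_single_tmul, tAct_Fact'_wedgeVec hp hodd, smul_smul, ← add_smul,
      show i + 1 + j = i + j + 1 by ring, show i + (j + 1) = i + j + 1 by ring,
      projCoeff_add_one_add hp hodd, mul_comm]

theorem symToWedge_comp_tAct_Eact (hp : p.Prime) (hodd : Odd p) :
    symToWedge p k ∘ₗ tAct (Eact p k) = tAct (Eact p k) ∘ₗ symToWedge p k := by
  have hF : Commute (symToWedge p k) (tAct (Fact' p k)) := symToWedge_comp_tAct_Fact' hp hodd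
  have hH : Commute (symToWedge p k)
      (tAct (Eact p k) * tAct (Fact' p k) - tAct (Fact' p k) * tAct (Eact p k)) := by
    rw [Module.End.mul_eq_comp, Module.End.mul_eq_comp, tAct_Eact_comp_sub]
    exact symToWedge_comp_tAct_Hact
  have hD := commute_commutator_of_commute
    (R := Module.End k ((Fin p → k) ⊗[k] (Fin p → k))) hF hH
  refine sub_eq_zero.1 (eq_zero_of_comp_tAct_Fact' hD.eq fun j => ?_)
  simp [Module.End.mul_eq_comp, tAct_tmul, Eact_single, eCoeff, symToWedge_single_tmul,
    projCoeff_zero_left hp, tAct_Eact_wedgeVec hp hodd]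

theorem ptrR_symToWedge (hp : p.Prime) (hodd : Odd p) :
    ptrR (Pi.basisFun k (Fin p)) (symToWedge p k) = -LinearMap.id := by
  rw [← neg_one_smul k LinearMap.id]
  refine eq_smul_id_of_comp_Fact'
    (ptrR_comp_commute _ (symToWedge_comp_tAct_Fact' hp hodd)) ?_
  simp [ptrR, symToWedge_single_tmul, projCoeff_zero_left hp, rid_map_coord_wedgeVec,
    ← Finset.sum_smul, sum_wedgeCoeff_zero]

theorem ptrL_symToWedge (hp : p.Prime) (hodd : Odd p) :
    ptrL (Pi.basisFun k (Fin p)) (symToWedge p k) = LinearMap.id := by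
  rw [← one_smul k LinearMap.id]
  refine eq_smul_id_of_comp_Fact'
    (ptrL_comp_commute _ (symToWedge_comp_tAct_Fact' hp hodd)) ?_
  simp [ptrL, symToWedge_single_tmul, projCoeff_zero_right, lid_map_coord_wedgeVec,
    ← Finset.sum_smul, sum_wedgeCoeff_self]

end Endomorphism

end BabyVerma

theorem stmt19_general (p : ℕ) (hp : p.Prime) (hp2 : 2 < p) [NeZero p]
    (k : Type*) [Field k] [CharP k p] :
    ∃ f : (Fin p → k) ⊗[k] (Fin p → k) →ₗ[k] (Fin p → k) ⊗[k] (Fin p → k),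
      (f ∘ₗ tAct (Hact p k) = tAct (Hact p k) ∘ₗ f) ∧
      (f ∘ₗ tAct (Eact p k) = tAct (Eact p k) ∘ₗ f) ∧
      (f ∘ₗ tAct (Fact' p k) = tAct (Fact' p k) ∘ₗ f) ∧
      (∀ x : (Fin p → k) ⊗[k] (Fin p → k),
        TensorProduct.comm k (Fin p → k) (Fin p → k) x = x →
        TensorProduct.comm k (Fin p → k) (Fin p → k) (f x) = - f x) ∧
      ptrR (Pi.basisFun k (Fin p)) f = - LinearMap.id ∧
      ptrR (Pi.basisFun k (Fin p)) f = - ptrL (Pi.basisFun k (Fin p)) f ∧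
      ptrR (Pi.basisFun k (Fin p)) f ≠ 0 := by
  have hodd : Odd p := hp.odd_of_ne_two hp2.ne'
  refine ⟨BabyVerma.symToWedge p k, BabyVerma.symToWedge_comp_tAct_Hact,
    BabyVerma.symToWedge_comp_tAct_Eact hp hodd, BabyVerma.symToWedge_comp_tAct_Fact' hp hodd,
    fun x _ => BabyVerma.comm_symToWedge x, BabyVerma.ptrR_symToWedge hp hodd, ?_, ?_⟩
  · rw [BabyVerma.ptrR_symToWedge hp hodd, BabyVerma.ptrL_symToWedge hp hodd]
  · rw [BabyVerma.ptrR_symToWedge hp hodd, neg_ne_zero]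
    exact one_ne_zero

/-- Let `χ` be the regular nilpotent character and `V = V_{χ,0}` the simple
`sl₂(k)`-module with basis `v₀, …, v_{p-1}`, `H⬝vᵢ = -2i⬝vᵢ`, `F⬝vᵢ = v_{i+1}`,
`E⬝vᵢ = i(1-i)⬝v_{i-1}`.  Then `V` is not ambidextrous: there is an
`sl₂(k)`-endomorphism `f` of `V ⊗ V` mapping the symmetric part `S²V` into the
exterior part `Λ²V` with `tr_R(f) = -id_V ≠ 0` and `tr_R(f) = -tr_L(f)`; hence
the canonical trace on `End(V)` fails to be ambidextrous. -/
theorem stmt19 (p : ℕ) (hp : p.Prime) (hp2 : 2 < p) [NeZero p]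
    (k : Type*) [Field k] [IsAlgClosed k] [CharP k p] :
    ∃ f : (Fin p → k) ⊗[k] (Fin p → k) →ₗ[k] (Fin p → k) ⊗[k] (Fin p → k),
      (f ∘ₗ tAct (Hact p k) = tAct (Hact p k) ∘ₗ f) ∧
      (f ∘ₗ tAct (Eact p k) = tAct (Eact p k) ∘ₗ f) ∧
      (f ∘ₗ tAct (Fact' p k) = tAct (Fact' p k) ∘ₗ f) ∧
      (∀ x : (Fin p → k) ⊗[k] (Fin p → k),
        TensorProduct.comm k (Fin p → k) (Fin p → k) x = x →
        TensorProduct.comm k (Fin p → k) (Fin p → k) (f x) = - f x) ∧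
      ptrR (Pi.basisFun k (Fin p)) f = - LinearMap.id ∧
      ptrR (Pi.basisFun k (Fin p)) f = - ptrL (Pi.basisFun k (Fin p)) f ∧
      ptrR (Pi.basisFun k (Fin p)) f ≠ 0 :=
  stmt19_general p hp hp2 k
end
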